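/- arXiv:2403.01526 — 5 statements merged into one kernel-verified Lean document; each statement's English description precedes it below -/
import Mathlib

section
/- If w ∈ W^(◦,k) and some prefix of w has color balance exactly k, then w can be reduced by elementary cancellations to the word ◦^k •^k. -/
/-- Words on the two-letter alphabet {◦,•}: `true` = ◦ (white), `false` = • (black). -/
abbrev Word := List Bool

/-- Color balance: number of white letters minus number of black letters. -/
def cb (w : Word) : ℤ := (w.count true : ℤ) - (w.count false : ℤ)

/-- Conjugation: reverse the word and swap the colors. -/
def wconj (w : Word) : Word := (w.map (fun b => !b)).reverse

/-- Elementary cancellation: deletion of an adjacent pair ◦• or •◦. -/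
def ECancel (w w' : Word) : Prop :=
  ∃ (u v : Word) (x : Bool), w = u ++ x :: (!x) :: v ∧ w' = u ++ v

/-- Concatenation of a list of words. -/
def cat (L : List Word) : Word := L.foldr (· ++ ·) []

/-- `W^(k)`: words whose color balance is divisible by `k`. -/
def Wmod (k : ℕ) : Set Word := {w | (k : ℤ) ∣ cb w}

/-- `W^(◦,k)`: words of balance 0 all of whose prefix balances lie in `[0,k]`. -/
def Wcirc (k : ℕ) : Set Word :=
  {w | cb w = 0 ∧ ∀ l : ℕ, 0 ≤ cb (w.take l) ∧ cb (w.take l) ≤ (k : ℤ)}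

/-- `W^(•,k)`: words of balance 0 all of whose prefix balances lie in `[-k,0]`. -/
def Wbul (k : ℕ) : Set Word :=
  {w | cb w = 0 ∧ ∀ l : ℕ, -(k : ℤ) ≤ cb (w.take l) ∧ cb (w.take l) ≤ 0}

/-- `W^(◦,∞)`: words of balance 0 with all prefix balances nonnegative. -/
def WcircInf : Set Word := {w | cb w = 0 ∧ ∀ l : ℕ, 0 ≤ cb (w.take l)}

/-- `W^(•,∞)`: words of balance 0 with all prefix balances nonpositive. -/
def WbulInf : Set Word := {w | cb w = 0 ∧ ∀ l : ℕ, cb (w.take l) ≤ 0}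

section AuxLemmas

lemma cb_append (u v : Word) : cb (u ++ v) = cb u + cb v := by
  simp [cb, List.count_append]; ring

lemma cb_cons_pair (x : Bool) (t : Word) : cb (x :: (!x) :: t) = cb t := by
  cases x <;> simp [cb, List.count_cons] <;> ring

lemma cb_cancel_eq (u v : Word) (x : Bool) : cb (u ++ x :: (!x) :: v) = cb (u ++ v) := by
  rw [cb_append, cb_append, cb_cons_pair]

lemma cb_replicate_true (n : ℕ) : cb (List.replicate n true) = n := by
  simp [cb, List.count_replicate]

lemma cb_replicate_false (n : ℕ) : cb (List.replicate n false) = -n := by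
  simp [cb, List.count_replicate]

lemma cb_take_cancel (u v : Word) (x : Bool) (l : ℕ) :
    ∃ l', cb ((u ++ v).take l) = cb ((u ++ x :: (!x) :: v).take l') := by
  by_cases h : l ≤ u.length
  · refine ⟨l, ?_⟩
    rw [List.take_append, List.take_append,
      Nat.sub_eq_zero_of_le h, List.take_zero, List.take_zero]
  · refine ⟨l + 2, ?_⟩
    push_neg at h
    rw [List.take_append, List.take_append]
    have h2 : l + 2 - u.length = (l - u.length) + 2 := by omega
    rw [h2, List.take_of_length_le (by omega), List.take_of_length_le (show u.length ≤ l + 2 by omega)]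
    simp only [List.take_succ_cons]
    rw [cb_append, cb_append, cb_cons_pair]

lemma exists_pair : ∀ l : Word, true ∈ l → false ∈ l →
    ∃ (u : Word) (x : Bool) (v : Word), l = u ++ x :: (!x) :: v := by
  intro l
  induction l with
  | nil => simp
  | cons a t ih =>
    intro ht hf
    cases t with
    | nil => cases a <;> simp_all
    | cons b t' =>
      by_cases hab : b = !a
      · exact ⟨[], a, t', by simp [hab]⟩
      · have hba : b = a := by cases a <;> cases b <;> simp_all
        subst hba
        have ht' : true ∈ b :: t' := by
          rcases List.mem_cons.mp ht with h | h
          · exact List.mem_cons.mpr (Or.inl h)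
          · exact h
        have hf' : false ∈ b :: t' := by
          rcases List.mem_cons.mp hf with h | h
          · exact List.mem_cons.mpr (Or.inl h)
          · exact h
        obtain ⟨u, x, v, h⟩ := ih ht' hf'
        exact ⟨b :: u, x, v, by simp [h]⟩

lemma wcirc_cancel {k : ℕ} (u v : Word) (x : Bool)
    (hw : (u ++ x :: (!x) :: v) ∈ Wcirc k) : (u ++ v) ∈ Wcirc k := by
  constructor
  · rw [← cb_cancel_eq u v x]; exact hw.1
  · intro l
    obtain ⟨l', h'⟩ := cb_take_cancel u v x l
    rw [h']; exact hw.2 l'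

lemma stmt5_aux (k : ℕ) (hk : 0 < k) : ∀ n (w : Word), w.length = n → w ∈ Wcirc k →
    (∃ l : ℕ, cb (w.take l) = (k : ℤ)) →
    Relation.ReflTransGen ECancel w (List.replicate k true ++ List.replicate k false) := by
  intro n
  induction n using Nat.strong_induction_on with
  | _ n ih =>
    intro w hn hw hex
    obtain ⟨l, hl⟩ := hex
    have hps : w.take l ++ w.drop l = w := List.take_append_drop l w
    set p := w.take l with hp
    set s := w.drop l with hs
    have hcb0 : cb w = 0 := hw.1
    have hcbs : cb s = -(k : ℤ) := by
      have h1 := cb_append p s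
      rw [hps] at h1
      linarith
    by_cases hf : false ∈ p
    · have ht : true ∈ p := by
        have hc : 0 < p.count true := by
          have h1 := hl
          simp only [cb] at h1
          omega
        exact List.count_pos_iff.mp hc
      obtain ⟨u, x, v, hpd⟩ := exists_pair p ht hf
      have hwd : w = u ++ x :: (!x) :: (v ++ s) := by rw [← hps, hpd]; simp
      have hec : ECancel w (u ++ (v ++ s)) := ⟨u, v ++ s, x, hwd, rfl⟩
      have hw' : (u ++ (v ++ s)) ∈ Wcirc k := wcirc_cancel u (v ++ s) x (hwd ▸ hw)
      have hpre : cb ((u ++ (v ++ s)).take (u ++ v).length) = (k : ℤ) := by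
        rw [show u ++ (v ++ s) = (u ++ v) ++ s by simp, List.take_left]
        have h2 := cb_cancel_eq u v x
        rw [← hpd] at h2
        linarith
      have hlen : (u ++ (v ++ s)).length < n := by
        have h1 : w.length = u.length + (v ++ s).length + 2 := by rw [hwd]; simp; omega
        simp only [List.length_append] at h1 ⊢
        omega
      exact Relation.ReflTransGen.head hec (ih _ hlen _ rfl hw' ⟨_, hpre⟩)
    · have hpt : p = List.replicate p.length true := by
        apply List.eq_replicate_of_mem
        intro b hb
        cases b
        · exact absurd hb hf
        · rfl
      have hplen : p.length = k := by
        have h1 := cb_replicate_true p.length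
        rw [← hpt, hl] at h1
        exact_mod_cast h1.symm
      by_cases ht : true ∈ s
      · have hfs : false ∈ s := by
          have hc : 0 < s.count false := by
            have h1 := hcbs
            simp only [cb] at h1
            omega
          exact List.count_pos_iff.mp hc
        obtain ⟨u, x, v, hsd⟩ := exists_pair s ht hfs
        have hwd : w = (p ++ u) ++ x :: (!x) :: v := by rw [← hps, hsd]; simp
        have hec : ECancel w ((p ++ u) ++ v) := ⟨p ++ u, v, x, hwd, rfl⟩
        have hw' : ((p ++ u) ++ v) ∈ Wcirc k := wcirc_cancel (p ++ u) v x (hwd ▸ hw)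
        have hpre : cb (((p ++ u) ++ v).take p.length) = (k : ℤ) := by
          rw [show (p ++ u) ++ v = p ++ (u ++ v) by simp, List.take_left]
          exact hl
        have hlen : ((p ++ u) ++ v).length < n := by
          have h1 : w.length = (p ++ u).length + v.length + 2 := by rw [hwd]; simp; omega
          simp only [List.length_append] at h1 ⊢
          omega
        exact Relation.ReflTransGen.head hec (ih _ hlen _ rfl hw' ⟨_, hpre⟩)
      · have hst : s = List.replicate s.length false := by
          apply List.eq_replicate_of_mem
          intro b hb
          cases b
          · rfl
          · exact absurd hb ht
        have hslen : s.length = k := by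
          have h1 := cb_replicate_false s.length
          rw [← hst, hcbs] at h1
          have : (s.length : ℤ) = (k : ℤ) := by linarith
          exact_mod_cast this
        rw [← hps, hpt, hplen, hst, hslen]

end AuxLemmas

/-- if `w ∈ W^(◦,k)` has a prefix of balance exactly `k`, then `w`
can be reduced by elementary cancellations to `◦^k •^k`. -/
theorem stmt5 (k : ℕ) (hk : 0 < k) (w : Word) (hw : w ∈ Wcirc k)
    (hl : ∃ l : ℕ, cb (w.take l) = (k : ℤ)) :
    Relation.ReflTransGen ECancel w
      (List.replicate k true ++ List.replicate k false) :=
  stmt5_aux k hk w.length w rfl hw hl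
end

section
/- Under the identification of irreducible representations of U_N^+ with words on {◦,•}, the multiplication rule u^w ⊗ u^{w′} = Σ_{w = az, w′ = \bar{z} b} u^{ab} defines an associative multiplication on the free abelian semigroup on words, with the empty word as unit. -/
/-- The fusion rule of `U_N^+` on basis words:
`u^w ⊗ u^{w'} = Σ_{w = az, w' = conj(z) b} u^{ab}`, encoded in the free
ℕ-semimodule on words.  The parameter `t` is the length of the cancelled
subword `z`. -/
noncomputable def fus (w w' : Word) : Word →₀ ℕ :=
  (((List.range (min w.length w'.length + 1)).filter
      (fun t => decide (w.drop (w.length - t) = wconj (w'.take t)))).map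
    (fun t => Finsupp.single (w.take (w.length - t) ++ w'.drop t) (1 : ℕ))).sum

/-- The bilinear extension of the fusion rule to the free abelian semigroup
(free ℕ-semimodule) on words. -/
noncomputable def fmul (x y : Word →₀ ℕ) : Word →₀ ℕ :=
  x.sum fun w m => y.sum fun w' m' => (m * m') • fus w w'

/-! Cancelling `t` letters between `w₁` and `w₂` and then `s` letters between the result and `w₃`
gives the same word as first cancelling between `w₂` and `w₃` and then against `w₁`: the second
cancellation either stays inside what is left of the middle word, or eats all of it and continues
into the outer word. Matching the two cases gives an involution `reassoc` between the index sets of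
the two bracketings, so the product is associative on basis words, hence everywhere by additivity.
The empty word admits only the empty cancellation, so it is a unit. -/

@[simp]
lemma length_wconj (w : Word) : (wconj w).length = w.length := by simp [wconj]

@[simp]
lemma wconj_append (a b : Word) : wconj (a ++ b) = wconj b ++ wconj a := by simp [wconj]

@[simp]
lemma wconj_wconj (w : Word) : wconj (wconj w) = w := by
  simp [wconj, List.map_reverse, Function.comp_def]

def CancelsAt (w w' : Word) (t : ℕ) : Prop :=
  ∃ a z b, w = a ++ z ∧ w' = wconj z ++ b ∧ z.length = t

def fuseAt (w w' : Word) (t : ℕ) : Word := w.take (w.length - t) ++ w'.drop t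

lemma fuseAt_eq {w w' a z b : Word} {t : ℕ} (hw : w = a ++ z) (hw' : w' = wconj z ++ b)
    (ht : z.length = t) : fuseAt w w' t = a ++ b := by
  subst hw hw' ht
  rw [fuseAt, List.length_append, Nat.add_sub_cancel, List.take_left' rfl,
    List.drop_left' (length_wconj z)]

lemma CancelsAt.le_length_left {w w' : Word} {t : ℕ} (h : CancelsAt w w' t) : t ≤ w.length := by
  obtain ⟨a, z, b, rfl, -, rfl⟩ := h
  simp

lemma CancelsAt.le_length_right {w w' : Word} {t : ℕ} (h : CancelsAt w w' t) :
    t ≤ w'.length := by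
  obtain ⟨a, z, b, -, rfl, rfl⟩ := h
  simp

def cancelLengths (w w' : Word) : Finset ℕ :=
  (Finset.range (min w.length w'.length + 1)).filter
    (fun t => w.drop (w.length - t) = wconj (w'.take t))

lemma fus_eq_sum_cancelLengths (w w' : Word) :
    fus w w' = ∑ t ∈ cancelLengths w w', Finsupp.single (fuseAt w w' t) 1 :=
  rfl

lemma mem_cancelLengths {w w' : Word} {t : ℕ} : t ∈ cancelLengths w w' ↔ CancelsAt w w' t := by
  simp only [cancelLengths, Finset.mem_filter, Finset.mem_range, Nat.lt_succ_iff, le_min_iff]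
  constructor
  · rintro ⟨⟨htw, -⟩, h⟩
    refine ⟨w.take (w.length - t), w.drop (w.length - t), w'.drop t,
      (List.take_append_drop _ _).symm, ?_, by simp; omega⟩
    rw [h, wconj_wconj, List.take_append_drop]
  · rintro ⟨a, z, b, rfl, rfl, rfl⟩
    refine ⟨⟨by simp, by simp⟩, ?_⟩
    rw [List.length_append, Nat.add_sub_cancel, List.drop_left' rfl,
      List.take_left' (length_wconj z), wconj_wconj]

lemma fus_nil_left (w : Word) : fus [] w = Finsupp.single w 1 := by
  simp [fus, wconj]

lemma fus_nil_right (w : Word) : fus w [] = Finsupp.single w 1 := by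
  simp [fus, wconj]

/-- Regrouping `(w₁ w₂) w₃`, cancelled first along `t` and then along `s` letters, as
`w₁ (w₂ w₃)`: `w₃` now cancels as much as it can of the `|w₂| - t` letters of `w₂` that survived
`w₁`, and `w₁` cancels the rest of the total `t + s`. -/
def reassoc (l : ℕ) (p : Σ _ : ℕ, ℕ) : Σ _ : ℕ, ℕ :=
  ⟨min p.2 (l - p.1), p.1 + p.2 - min p.2 (l - p.1)⟩

lemma reassoc_reassoc {l : ℕ} {p : Σ _ : ℕ, ℕ} (hp : p.1 ≤ l) : reassoc l (reassoc l p) = p := by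
  obtain ⟨t, s⟩ := p
  dsimp only [reassoc] at hp ⊢
  congr 1 <;> omega

lemma CancelsAt.reassoc_right {w₁ w₂ w₃ : Word} {t s : ℕ} (h₁₂ : CancelsAt w₁ w₂ t)
    (h : CancelsAt (fuseAt w₁ w₂ t) w₃ s) :
    CancelsAt w₂ w₃ (reassoc w₂.length ⟨t, s⟩).1 ∧
      CancelsAt w₁ (fuseAt w₂ w₃ (reassoc w₂.length ⟨t, s⟩).1) (reassoc w₂.length ⟨t, s⟩).2 ∧
      fuseAt (fuseAt w₁ w₂ t) w₃ s =
        fuseAt w₁ (fuseAt w₂ w₃ (reassoc w₂.length ⟨t, s⟩).1) (reassoc w₂.length ⟨t, s⟩).2 := by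
  obtain ⟨a, z, b, rfl, rfl, rfl⟩ := h₁₂
  obtain ⟨c, z', d, hab, rfl, rfl⟩ := h
  rw [fuseAt_eq rfl rfl rfl] at hab ⊢
  rcases List.append_eq_append_iff.1 hab with ⟨a', rfl, rfl⟩ | ⟨c', rfl, rfl⟩
  · -- `w₃` cancels inside what is left of `w₂`
    have hq : reassoc (wconj z ++ (a' ++ z')).length ⟨z.length, z'.length⟩ =
        ⟨z'.length, z.length⟩ := by
      simp only [reassoc, List.length_append, length_wconj]; congr 1 <;> omega
    have h₂₃ : fuseAt (wconj z ++ (a' ++ z')) (wconj z' ++ d) z'.length = wconj z ++ (a' ++ d) :=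
      by rw [fuseAt_eq (a := wconj z ++ a') (by simp) rfl rfl, List.append_assoc]
    rw [hq, h₂₃, fuseAt_eq (a := a ++ a') (by simp) rfl rfl, fuseAt_eq rfl rfl rfl,
      List.append_assoc]
    exact ⟨⟨wconj z ++ a', z', d, by simp, rfl, rfl⟩, ⟨a, z, a' ++ d, rfl, rfl, rfl⟩, rfl⟩
  · -- `w₃` eats what is left of `w₂` and continues into `w₁`
    have hq : reassoc (wconj z ++ b).length ⟨z.length, (c' ++ b).length⟩ =
        ⟨b.length, (c' ++ z).length⟩ := by
      simp only [reassoc, List.length_append, length_wconj]; congr 1 <;> omega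
    have h₂₃ : fuseAt (wconj z ++ b) (wconj (c' ++ b) ++ d) b.length = wconj (c' ++ z) ++ d :=
      by rw [fuseAt_eq (b := wconj c' ++ d) rfl (by simp) rfl]; simp
    rw [hq, h₂₃, fuseAt_eq (a := c) (by simp) rfl rfl, fuseAt_eq (a := c) (by simp) rfl rfl]
    exact ⟨⟨wconj z, b, wconj c' ++ d, rfl, by simp, rfl⟩, ⟨c, c' ++ z, d, by simp, rfl, rfl⟩, rfl⟩

lemma CancelsAt.reassoc_left {w₁ w₂ w₃ : Word} {u r : ℕ} (h₂₃ : CancelsAt w₂ w₃ u)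
    (h : CancelsAt w₁ (fuseAt w₂ w₃ u) r) :
    CancelsAt w₁ w₂ (reassoc w₂.length ⟨u, r⟩).1 ∧
      CancelsAt (fuseAt w₁ w₂ (reassoc w₂.length ⟨u, r⟩).1) w₃ (reassoc w₂.length ⟨u, r⟩).2 := by
  obtain ⟨e, y, f, rfl, rfl, rfl⟩ := h₂₃
  obtain ⟨g, y', h', rfl, hef, rfl⟩ := h
  rw [fuseAt_eq rfl rfl rfl] at hef
  rcases List.append_eq_append_iff.1 hef with ⟨a', hy', rfl⟩ | ⟨c', rfl, rfl⟩
  · -- `w₁` eats what is left of `w₂` and continues into `w₃`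
    obtain rfl : y' = wconj a' ++ wconj e := by rw [← wconj_wconj y', hy', wconj_append]
    have hq : reassoc (e ++ y).length ⟨y.length, (wconj a' ++ wconj e).length⟩ =
        ⟨e.length, (a' ++ y).length⟩ := by
      simp only [reassoc, List.length_append, length_wconj]; congr 1 <;> omega
    rw [hq, fuseAt_eq (w := g ++ (wconj a' ++ wconj e)) (w' := e ++ y) (t := e.length)
      (a := g ++ wconj a') (z := wconj e) (b := y) (by simp) (by simp) (by simp)]
    exact ⟨⟨g ++ wconj a', wconj e, y, by simp, by simp, by simp⟩,
      ⟨g, wconj a' ++ y, h', by simp, by simp, by simp⟩⟩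
  · -- `w₁` cancels inside what is left of `w₂`
    have hq : reassoc (wconj y' ++ c' ++ y).length ⟨y.length, y'.length⟩ =
        ⟨y'.length, y.length⟩ := by
      simp only [reassoc, List.length_append, length_wconj]; congr 1 <;> omega
    rw [hq, fuseAt_eq (b := c' ++ y) rfl (by simp) rfl]
    exact ⟨⟨g, y', c' ++ y, rfl, by simp, rfl⟩, ⟨g ++ c', y, f, by simp, rfl, rfl⟩⟩

theorem sum_fus_fuseAt_assoc (w₁ w₂ w₃ : Word) :
    ∑ t ∈ cancelLengths w₁ w₂, fus (fuseAt w₁ w₂ t) w₃ =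
      ∑ u ∈ cancelLengths w₂ w₃, fus w₁ (fuseAt w₂ w₃ u) := by
  simp only [fus_eq_sum_cancelLengths, Finset.sum_sigma']
  refine Finset.sum_nbij' (reassoc w₂.length) (reassoc w₂.length) ?_ ?_ ?_ ?_ ?_ <;>
    rintro ⟨i, j⟩ h <;> simp only [Finset.mem_sigma, mem_cancelLengths] at h ⊢
  · exact (h.1.reassoc_right h.2).imp_right And.left
  · exact h.1.reassoc_left h.2
  · exact reassoc_reassoc h.1.le_length_right
  · exact reassoc_reassoc h.1.le_length_left
  · rw [(h.1.reassoc_right h.2).2.2]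

lemma Finsupp.addHom_ext_of_single_one {α M : Type*} [AddZeroClass M] {f g : (α →₀ ℕ) →+ M}
    (h : ∀ a, f (Finsupp.single a 1) = g (Finsupp.single a 1)) : f = g :=
  Finsupp.addHom_ext' fun a => AddMonoidHom.ext_nat (h a)

lemma fmul_add_left (x x' y : Word →₀ ℕ) : fmul (x + x') y = fmul x y + fmul x' y :=
  Finsupp.sum_add_index' (fun _ => by simp) fun _ _ _ => by
    simp only [add_mul, add_smul, Finsupp.sum_add]

lemma fmul_add_right (x y y' : Word →₀ ℕ) : fmul x (y + y') = fmul x y + fmul x y' := by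
  simp only [fmul, ← Finsupp.sum_add]
  congr 1
  funext w m
  exact Finsupp.sum_add_index' (fun _ => by simp) fun _ _ _ => by simp only [mul_add, add_smul]

noncomputable def fmulLeft (y : Word →₀ ℕ) : (Word →₀ ℕ) →+ (Word →₀ ℕ) where
  toFun x := fmul x y
  map_zero' := by simp [fmul]
  map_add' x x' := fmul_add_left x x' y

noncomputable def fmulRight (x : Word →₀ ℕ) : (Word →₀ ℕ) →+ (Word →₀ ℕ) where
  toFun y := fmul x y
  map_zero' := by simp [fmul]
  map_add' := fmul_add_right x

lemma fmul_sum_left {ι : Type*} (s : Finset ι) (f : ι → Word →₀ ℕ) (y : Word →₀ ℕ) :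
    fmul (∑ i ∈ s, f i) y = ∑ i ∈ s, fmul (f i) y :=
  map_sum (fmulLeft y) f s

lemma fmul_sum_right {ι : Type*} (x : Word →₀ ℕ) (s : Finset ι) (f : ι → Word →₀ ℕ) :
    fmul x (∑ i ∈ s, f i) = ∑ i ∈ s, fmul x (f i) :=
  map_sum (fmulRight x) f s

lemma fmul_single_single (w w' : Word) :
    fmul (Finsupp.single w 1) (Finsupp.single w' 1) = fus w w' := by
  simp [fmul]

lemma fmul_single_single_assoc (w₁ w₂ w₃ : Word) :
    fmul (fmul (Finsupp.single w₁ 1) (Finsupp.single w₂ 1)) (Finsupp.single w₃ 1) =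
      fmul (Finsupp.single w₁ 1) (fmul (Finsupp.single w₂ 1) (Finsupp.single w₃ 1)) := by
  simp only [fmul_single_single, fus_eq_sum_cancelLengths w₁ w₂, fus_eq_sum_cancelLengths w₂ w₃,
    fmul_sum_left, fmul_sum_right]
  exact sum_fus_fuseAt_assoc w₁ w₂ w₃

theorem fmul_assoc (x y z : Word →₀ ℕ) : fmul (fmul x y) z = fmul x (fmul y z) := by
  have hz (a b : Word) : fmulRight (fmul (Finsupp.single a 1) (Finsupp.single b 1)) =
      (fmulRight (Finsupp.single a 1)).comp (fmulRight (Finsupp.single b 1)) :=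
    Finsupp.addHom_ext_of_single_one (fmul_single_single_assoc a b)
  have hy (a : Word) : (fmulLeft z).comp (fmulRight (Finsupp.single a 1)) =
      (fmulRight (Finsupp.single a 1)).comp (fmulLeft z) :=
    Finsupp.addHom_ext_of_single_one fun b => DFunLike.congr_fun (hz a b) z
  have hx : (fmulLeft z).comp (fmulLeft y) = fmulLeft (fmul y z) :=
    Finsupp.addHom_ext_of_single_one fun a => DFunLike.congr_fun (hy a) y
  exact DFunLike.congr_fun hx x

lemma fmul_single_nil_left (x : Word →₀ ℕ) : fmul (Finsupp.single [] 1) x = x :=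
  DFunLike.congr_fun (f := fmulRight (Finsupp.single [] 1)) (g := AddMonoidHom.id _)
    (Finsupp.addHom_ext_of_single_one fun w => (fmul_single_single [] w).trans (fus_nil_left w)) x

lemma fmul_single_nil_right (x : Word →₀ ℕ) : fmul x (Finsupp.single [] 1) = x :=
  DFunLike.congr_fun (f := fmulLeft (Finsupp.single [] 1)) (g := AddMonoidHom.id _)
    (Finsupp.addHom_ext_of_single_one fun w => (fmul_single_single w []).trans (fus_nil_right w)) x

/-- the `U_N^+` fusion rule defines an associative multiplication
on the free abelian semigroup on words, with the empty word as unit. -/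
theorem stmt11 :
    (∀ x y z : Word →₀ ℕ, fmul (fmul x y) z = fmul x (fmul y z)) ∧
    (∀ x : Word →₀ ℕ,
      fmul (Finsupp.single ([] : Word) 1) x = x ∧
      fmul x (Finsupp.single ([] : Word) 1) = x) :=
  ⟨fmul_assoc, fun x => ⟨fmul_single_nil_left x, fmul_single_nil_right x⟩⟩
end

section
/- A partition p ∈ P(k,k) is projective (pp = p = p*) if and only if there exists a partition r ∈ P(k,k) with r*r = p. -/
/-- A partition in `P(k,l)` (k upper and l lower points) is modeled as an
equivalence relation (a `Setoid`) on the disjoint union of the two rows. -/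
abbrev Pn (k l : ℕ) := Setoid (Fin k ⊕ Fin l)

/-- The adjoint `p*`: reflection across the horizontal axis. -/
def starP {k l : ℕ} (p : Pn k l) : Pn l k := Setoid.comap Sum.swap p

/-- Vertical concatenation `qp` of `p ∈ P(k,l)` and `q ∈ P(l,m)`: two outer
points are connected iff they are joined by a chain of strings of `p` and `q`
through the middle row; loops are discarded. -/
def compP {k l m : ℕ} (q : Pn l m) (p : Pn k l) : Pn k m :=
  let α := Fin k ⊕ (Fin l ⊕ Fin m)
  let i12 : Fin k ⊕ Fin l → α := Sum.map id Sum.inl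
  let i23 : Fin l ⊕ Fin m → α := Sum.inr
  let R : α → α → Prop := fun a b =>
    (∃ x y, i12 x = a ∧ i12 y = b ∧ p.r x y) ∨
    (∃ x y, i23 x = a ∧ i23 y = b ∧ q.r x y)
  Setoid.comap (Sum.map id Sum.inr) (Relation.EqvGen.setoid R)

namespace Stmt13Aux

variable {k l m : ℕ}

/-- The generating relation used in `compP`. -/
def Rgen (p : Pn k l) (q : Pn l m) : (Fin k ⊕ (Fin l ⊕ Fin m)) → (Fin k ⊕ (Fin l ⊕ Fin m)) → Prop :=
  fun a b =>
    (∃ x y, Sum.map id Sum.inl x = a ∧ Sum.map id Sum.inl y = b ∧ p.r x y) ∨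
    (∃ x y, (Sum.inr x : Fin k ⊕ (Fin l ⊕ Fin m)) = a ∧ (Sum.inr y : Fin k ⊕ (Fin l ⊕ Fin m)) = b ∧ q.r x y)

theorem compP_eq (p : Pn k l) (q : Pn l m) :
    compP q p = Setoid.comap (Sum.map id Sum.inr) (Relation.EqvGen.setoid (Rgen p q)) := rfl

/-- The equivalence generated on the middle row. -/
def Mid (p : Pn k l) (q : Pn l m) : Fin l → Fin l → Prop :=
  Relation.EqvGen fun d d' => p.r (.inr d) (.inr d') ∨ q.r (.inl d) (.inl d')

theorem mid_equiv (p : Pn k l) (q : Pn l m) : Equivalence (Mid p q) :=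
  Relation.EqvGen.is_equivalence _

/-- `conn p q a d`: the point `a` is connected to the middle point `d`. -/
def conn (p : Pn k l) (q : Pn l m) : (Fin k ⊕ (Fin l ⊕ Fin m)) → Fin l → Prop
  | .inl x, d => ∃ d0, p.r (.inl x) (.inr d0) ∧ Mid p q d0 d
  | .inr (.inl d0), d => Mid p q d0 d
  | .inr (.inr y), d => ∃ d', q.r (.inl d') (.inr y) ∧ Mid p q d' d

/-- Direct relation within the top or bottom row. -/
def Dir (p : Pn k l) (q : Pn l m) :
    (Fin k ⊕ (Fin l ⊕ Fin m)) → (Fin k ⊕ (Fin l ⊕ Fin m)) → Prop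
  | .inl x, .inl y => p.r (.inl x) (.inl y)
  | .inr (.inr x), .inr (.inr y) => q.r (.inr x) (.inr y)
  | _, _ => False

/-- Explicit description of the equivalence generated by `Rgen`. -/
def C (p : Pn k l) (q : Pn l m) (a b : Fin k ⊕ (Fin l ⊕ Fin m)) : Prop :=
  Dir p q a b ∨ ∃ d, conn p q a d ∧ conn p q b d

theorem conn_mid {p : Pn k l} {q : Pn l m} {a d d'} (h : conn p q a d) (e : Mid p q d d') :
    conn p q a d' := by
  rcases a with x | (d0 | y)
  · obtain ⟨d0, h0, e0⟩ := h; exact ⟨d0, h0, (mid_equiv p q).trans e0 e⟩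
  · exact (mid_equiv p q).trans h e
  · obtain ⟨d0, h0, e0⟩ := h; exact ⟨d0, h0, (mid_equiv p q).trans e0 e⟩

theorem conn_unique {p : Pn k l} {q : Pn l m} {a d d'} (h : conn p q a d) (h' : conn p q a d') :
    Mid p q d d' := by
  have hE := mid_equiv p q
  rcases a with x | (d0 | y)
  · obtain ⟨d0, h0, e0⟩ := h; obtain ⟨d1, h1, e1⟩ := h'
    exact hE.trans (hE.symm e0) (hE.trans
      (Relation.EqvGen.rel _ _ (Or.inl (p.iseqv.trans (p.iseqv.symm h0) h1))) e1)
  · exact hE.trans (hE.symm h) h'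
  · obtain ⟨d0, h0, e0⟩ := h; obtain ⟨d1, h1, e1⟩ := h'
    exact hE.trans (hE.symm e0) (hE.trans
      (Relation.EqvGen.rel _ _ (Or.inr (q.iseqv.trans h0 (q.iseqv.symm h1)))) e1)

theorem dir_symm {p : Pn k l} {q : Pn l m} {a b} (h : Dir p q a b) : Dir p q b a := by
  rcases a with x | (d | x) <;> rcases b with y | (d' | y) <;>
    simp only [Dir] at h ⊢ <;> first
      | exact p.iseqv.symm h
      | exact q.iseqv.symm h
      | exact h

theorem dir_trans {p : Pn k l} {q : Pn l m} {a b c} (h : Dir p q a b) (h' : Dir p q b c) :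
    Dir p q a c := by
  rcases a with x | (d | x) <;> rcases b with y | (d' | y) <;> rcases c with z | (d'' | z) <;>
    simp only [Dir] at h h' ⊢ <;> first
      | exact p.iseqv.trans h h'
      | exact q.iseqv.trans h h'
      | exact h
      | exact h'

theorem dir_conn {p : Pn k l} {q : Pn l m} {a b d} (h : Dir p q a b) (h' : conn p q b d) :
    conn p q a d := by
  rcases a with x | (d0 | x) <;> rcases b with y | (d1 | y) <;> simp only [Dir] at h
  · obtain ⟨d0, h0, e0⟩ := h'; exact ⟨d0, p.iseqv.trans h h0, e0⟩
  · obtain ⟨d', h0, e0⟩ := h'; exact ⟨d', q.iseqv.trans h0 (q.iseqv.symm h), e0⟩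

theorem C_refl (p : Pn k l) (q : Pn l m) (a) : C p q a a := by
  rcases a with x | (d | y)
  · exact Or.inl (p.iseqv.refl _)
  · exact Or.inr ⟨d, (mid_equiv p q).refl d, (mid_equiv p q).refl d⟩
  · exact Or.inl (q.iseqv.refl _)

theorem C_symm {p : Pn k l} {q : Pn l m} {a b} (h : C p q a b) : C p q b a := by
  rcases h with h | ⟨d, h1, h2⟩
  · exact Or.inl (dir_symm h)
  · exact Or.inr ⟨d, h2, h1⟩

theorem C_trans {p : Pn k l} {q : Pn l m} {a b c} (h : C p q a b) (h' : C p q b c) :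
    C p q a c := by
  rcases h with h | ⟨d, h1, h2⟩ <;> rcases h' with h' | ⟨d', h1', h2'⟩
  · exact Or.inl (dir_trans h h')
  · exact Or.inr ⟨d', dir_conn h h1', h2'⟩
  · exact Or.inr ⟨d, h1, dir_conn (dir_symm h') h2⟩
  · exact Or.inr ⟨d', conn_mid h1 (conn_unique h2 h1'), h2'⟩

theorem rgen_le_C {p : Pn k l} {q : Pn l m} {a b} (h : Rgen p q a b) : C p q a b := by
  have hE := mid_equiv p q
  rcases h with ⟨x, y, rfl, rfl, h⟩ | ⟨x, y, rfl, rfl, h⟩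
  · rcases x with x | d <;> rcases y with y | d'
    · exact Or.inl h
    · exact Or.inr ⟨d', ⟨d', h, hE.refl _⟩, hE.refl _⟩
    · exact Or.inr ⟨d, hE.refl _, ⟨d, p.iseqv.symm h, hE.refl _⟩⟩
    · exact Or.inr ⟨d', Relation.EqvGen.rel _ _ (Or.inl h), hE.refl _⟩
  · rcases x with d | x <;> rcases y with d' | y
    · exact Or.inr ⟨d', Relation.EqvGen.rel _ _ (Or.inr h), hE.refl _⟩
    · exact Or.inr ⟨d, hE.refl _, ⟨d, h, hE.refl _⟩⟩
    · exact Or.inr ⟨d', ⟨d', q.iseqv.symm h, hE.refl _⟩, hE.refl _⟩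
    · exact Or.inl h

theorem mid_eqvGen {p : Pn k l} {q : Pn l m} {d d'} (h : Mid p q d d') :
    Relation.EqvGen (Rgen p q) (.inr (.inl d)) (.inr (.inl d')) := by
  induction h with
  | rel a b hab =>
    rcases hab with hp | hq
    · exact Relation.EqvGen.rel _ _ (Or.inl ⟨.inr a, .inr b, rfl, rfl, hp⟩)
    · exact Relation.EqvGen.rel _ _ (Or.inr ⟨.inl a, .inl b, rfl, rfl, hq⟩)
  | refl a => exact Relation.EqvGen.refl _
  | symm a b _ ih => exact Relation.EqvGen.symm _ _ ih
  | trans a b c _ _ ih1 ih2 => exact Relation.EqvGen.trans _ _ _ ih1 ih2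

theorem conn_eqvGen {p : Pn k l} {q : Pn l m} {a d} (h : conn p q a d) :
    Relation.EqvGen (Rgen p q) a (.inr (.inl d)) := by
  rcases a with x | (d0 | y)
  · obtain ⟨d0, h0, e0⟩ := h
    exact Relation.EqvGen.trans _ _ _
      (Relation.EqvGen.rel _ _ (Or.inl ⟨.inl x, .inr d0, rfl, rfl, h0⟩)) (mid_eqvGen e0)
  · exact mid_eqvGen h
  · obtain ⟨d', h0, e0⟩ := h
    exact Relation.EqvGen.trans _ _ _
      (Relation.EqvGen.symm _ _ (Relation.EqvGen.rel _ _ (Or.inr ⟨.inl d', .inr y, rfl, rfl, h0⟩)))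
      (mid_eqvGen e0)

theorem eqvGen_iff_C {p : Pn k l} {q : Pn l m} {a b} :
    Relation.EqvGen (Rgen p q) a b ↔ C p q a b := by
  constructor
  · intro h
    induction h with
    | rel a b hab => exact rgen_le_C hab
    | refl a => exact C_refl p q a
    | symm a b _ ih => exact C_symm ih
    | trans a b c _ _ ih1 ih2 => exact C_trans ih1 ih2
  · rintro (h | ⟨d, h1, h2⟩)
    · rcases a with x | (d | x) <;> rcases b with y | (d' | y) <;> simp only [Dir] at h
      · exact Relation.EqvGen.rel _ _ (Or.inl ⟨.inl x, .inl y, rfl, rfl, h⟩)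
      · exact Relation.EqvGen.rel _ _ (Or.inr ⟨.inr x, .inr y, rfl, rfl, h⟩)
    · exact Relation.EqvGen.trans _ _ _ (conn_eqvGen h1)
        (Relation.EqvGen.symm _ _ (conn_eqvGen h2))

theorem compP_rel_iff (p : Pn k l) (q : Pn l m) (a b : Fin k ⊕ Fin m) :
    (compP q p).r a b ↔ C p q (Sum.map id Sum.inr a) (Sum.map id Sum.inr b) :=
  eqvGen_iff_C

section Specialize

variable {k : ℕ} (r : Pn k k)

theorem mid_star {d d' : Fin k} :
    Mid r (starP r) d d' ↔ r.r (.inr d) (.inr d') := by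
  constructor
  · intro h
    induction h with
    | rel a b hab =>
      rcases hab with hp | hq
      · exact hp
      · exact hq
    | refl a => exact r.iseqv.refl _
    | symm a b _ ih => exact r.iseqv.symm ih
    | trans a b c _ _ ih1 ih2 => exact r.iseqv.trans ih1 ih2
  · exact fun h => Relation.EqvGen.rel _ _ (Or.inl h)

theorem sLL {x y : Fin k} :
    (compP (starP r) r).r (.inl x) (.inl y) ↔ r.r (.inl x) (.inl y) := by
  rw [compP_rel_iff]
  constructor
  · rintro (h | ⟨d, ⟨d0, h0, e0⟩, ⟨d1, h1, e1⟩⟩)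
    · exact h
    · exact r.iseqv.trans h0 (r.iseqv.trans ((mid_star r).1 e0)
        (r.iseqv.trans (r.iseqv.symm ((mid_star r).1 e1)) (r.iseqv.symm h1)))
  · exact fun h => Or.inl h

theorem sLR {x y : Fin k} :
    (compP (starP r) r).r (.inl x) (.inr y) ↔
      r.r (.inl x) (.inl y) ∧ ∃ d, r.r (.inl x) (.inr d) := by
  rw [compP_rel_iff]
  constructor
  · rintro (h | ⟨d, ⟨d0, h0, e0⟩, ⟨d1, h1, e1⟩⟩)
    · exact h.elim
    · have h1' : r.r (.inr d1) (.inl y) := h1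
      refine ⟨r.iseqv.trans h0 (r.iseqv.trans ((mid_star r).1 e0)
        (r.iseqv.trans (r.iseqv.symm ((mid_star r).1 e1)) h1')), d0, h0⟩
  · rintro ⟨hxy, d0, h0⟩
    have h1 : (starP r).r (.inl d0) (.inr y) :=
      r.iseqv.trans (r.iseqv.symm h0) hxy
    exact Or.inr ⟨d0, ⟨d0, h0, (mid_equiv _ _).refl _⟩, ⟨d0, h1, (mid_equiv _ _).refl _⟩⟩

theorem sRR {x y : Fin k} :
    (compP (starP r) r).r (.inr x) (.inr y) ↔ r.r (.inl x) (.inl y) := by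
  rw [compP_rel_iff]
  constructor
  · rintro (h | ⟨d, ⟨d0, h0, e0⟩, ⟨d1, h1, e1⟩⟩)
    · exact h
    · have h0' : r.r (.inr d0) (.inl x) := h0
      have h1' : r.r (.inr d1) (.inl y) := h1
      exact r.iseqv.trans (r.iseqv.symm h0') (r.iseqv.trans ((mid_star r).1 e0)
        (r.iseqv.trans (r.iseqv.symm ((mid_star r).1 e1)) h1'))
  · exact fun h => Or.inl (show (starP r).r (.inr x) (.inr y) from h)

theorem sRL {x y : Fin k} :
    (compP (starP r) r).r (.inr x) (.inl y) ↔
      r.r (.inl y) (.inl x) ∧ ∃ d, r.r (.inl y) (.inr d) := by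
  rw [show ((compP (starP r) r).r (.inr x) (.inl y) ↔
      (compP (starP r) r).r (.inl y) (.inr x)) from
    ⟨(compP (starP r) r).iseqv.symm, (compP (starP r) r).iseqv.symm⟩]
  exact sLR r

theorem P_transfer {x y : Fin k} (h : r.r (.inl x) (.inl y)) :
    (∃ d, r.r (.inl x) (.inr d)) → ∃ d, r.r (.inl y) (.inr d) := by
  rintro ⟨d, hd⟩
  exact ⟨d, r.iseqv.trans (r.iseqv.symm h) hd⟩

theorem star_s : starP (compP (starP r) r) = compP (starP r) r := by
  apply Setoid.ext
  intro a b
  show (compP (starP r) r).r (Sum.swap a) (Sum.swap b) ↔ (compP (starP r) r).r a b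
  rcases a with x | x <;> rcases b with y | y
  · rw [Sum.swap_inl, Sum.swap_inl, sRR, sLL]
  · rw [Sum.swap_inl, Sum.swap_inr, sRL, sLR]
    exact ⟨fun ⟨h, hP⟩ => ⟨r.iseqv.symm h, P_transfer r h hP⟩,
      fun ⟨h, hP⟩ => ⟨r.iseqv.symm h, P_transfer r h hP⟩⟩
  · rw [Sum.swap_inr, Sum.swap_inl, sLR, sRL]
    exact ⟨fun ⟨h, hP⟩ => ⟨r.iseqv.symm h, P_transfer r h hP⟩,
      fun ⟨h, hP⟩ => ⟨r.iseqv.symm h, P_transfer r h hP⟩⟩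
  · rw [Sum.swap_inr, Sum.swap_inr, sLL, sRR]

theorem mid_ss {d d' : Fin k} :
    Mid (compP (starP r) r) (compP (starP r) r) d d' ↔ r.r (.inl d) (.inl d') := by
  constructor
  · intro h
    induction h with
    | rel a b hab =>
      rcases hab with hp | hq
      · exact (sRR r).1 hp
      · exact (sLL r).1 hq
    | refl a => exact r.iseqv.refl _
    | symm a b _ ih => exact r.iseqv.symm ih
    | trans a b c _ _ ih1 ih2 => exact r.iseqv.trans ih1 ih2
  · exact fun h => Relation.EqvGen.rel _ _ (Or.inr ((sLL r).2 h))

theorem ssLL {x y : Fin k} :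
    (compP (compP (starP r) r) (compP (starP r) r)).r (.inl x) (.inl y) ↔
      (compP (starP r) r).r (.inl x) (.inl y) := by
  rw [compP_rel_iff, sLL]
  constructor
  · rintro (h | ⟨d, ⟨d0, h0, e0⟩, ⟨d1, h1, e1⟩⟩)
    · exact (sLL r).1 h
    · obtain ⟨hx, -⟩ := (sLR r).1 h0
      obtain ⟨hy, -⟩ := (sLR r).1 h1
      exact r.iseqv.trans hx (r.iseqv.trans ((mid_ss r).1 e0)
        (r.iseqv.trans (r.iseqv.symm ((mid_ss r).1 e1)) (r.iseqv.symm hy)))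
  · exact fun h => Or.inl ((sLL r).2 h)

theorem ssLR {x y : Fin k} :
    (compP (compP (starP r) r) (compP (starP r) r)).r (.inl x) (.inr y) ↔
      (compP (starP r) r).r (.inl x) (.inr y) := by
  rw [compP_rel_iff, sLR]
  constructor
  · rintro (h | ⟨d, ⟨d0, h0, e0⟩, ⟨d1, h1, e1⟩⟩)
    · exact h.elim
    · obtain ⟨hx, hPx⟩ := (sLR r).1 h0
      have h1' : (compP (starP r) r).r (.inl d1) (.inr y) := h1
      obtain ⟨hy, -⟩ := (sLR r).1 h1'
      exact ⟨r.iseqv.trans hx (r.iseqv.trans ((mid_ss r).1 e0)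
        (r.iseqv.trans (r.iseqv.symm ((mid_ss r).1 e1)) hy)), hPx⟩
  · rintro ⟨hxy, hP⟩
    refine Or.inr ⟨x, ⟨x, (sLR r).2 ⟨r.iseqv.refl _, hP⟩, (mid_equiv _ _).refl _⟩,
      ⟨y, ?_, (mid_ss r).2 (r.iseqv.symm hxy)⟩⟩
    exact (sLR r).2 ⟨r.iseqv.refl _, P_transfer r hxy hP⟩

theorem ssRR {x y : Fin k} :
    (compP (compP (starP r) r) (compP (starP r) r)).r (.inr x) (.inr y) ↔
      (compP (starP r) r).r (.inr x) (.inr y) := by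
  rw [compP_rel_iff, sRR]
  constructor
  · rintro (h | ⟨d, ⟨d0, h0, e0⟩, ⟨d1, h1, e1⟩⟩)
    · exact (sRR r).1 h
    · have h0' : (compP (starP r) r).r (.inl d0) (.inr x) := h0
      have h1' : (compP (starP r) r).r (.inl d1) (.inr y) := h1
      obtain ⟨hx, -⟩ := (sLR r).1 h0'
      obtain ⟨hy, -⟩ := (sLR r).1 h1'
      exact r.iseqv.trans (r.iseqv.symm hx) (r.iseqv.trans ((mid_ss r).1 e0)
        (r.iseqv.trans (r.iseqv.symm ((mid_ss r).1 e1)) hy))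
  · exact fun h => Or.inl (show (compP (starP r) r).r (.inr x) (.inr y) from (sRR r).2 h)

theorem comp_ss :
    compP (compP (starP r) r) (compP (starP r) r) = compP (starP r) r := by
  apply Setoid.ext
  intro a b
  rcases a with x | x <;> rcases b with y | y
  · exact ssLL r
  · exact ssLR r
  · rw [show ((compP (compP (starP r) r) (compP (starP r) r)).r (.inr x) (.inl y) ↔
        (compP (compP (starP r) r) (compP (starP r) r)).r (.inl y) (.inr x)) from
      ⟨(compP _ _).iseqv.symm, (compP _ _).iseqv.symm⟩, ssLR r]
    exact ⟨(compP (starP r) r).iseqv.symm, (compP (starP r) r).iseqv.symm⟩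
  · exact ssRR r

end Specialize


end Stmt13Aux

/-- a partition `p ∈ P(k,k)` is projective (`pp = p = p*`) if and
only if `p = r*r` for some partition `r ∈ P(k,k)`. -/
theorem stmt13 (k : ℕ) (p : Pn k k) :
    (compP p p = p ∧ starP p = p) ↔ ∃ r : Pn k k, compP (starP r) r = p := by
  constructor
  · rintro ⟨h1, h2⟩
    exact ⟨p, by rw [h2, h1]⟩
  · rintro ⟨r, rfl⟩
    exact ⟨Stmt13Aux.comp_ss r, Stmt13Aux.star_s r⟩
end

section
/- Conversely, if 𝒫 ⊆ Proj_𝒞 satisfies 𝒫⊙𝒫 ⊆ 𝒫, \bar{𝒫} = 𝒫, closure under equivalence in 𝒞, and closure under domination, then 𝒫 is a module of projective partitions over 𝒞 (i.e. rpr* ∈ 𝒫 for all r ∈ 𝒞 and p ∈ 𝒫 whenever defined). -/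
/-- A two-colored partition: upper colors `u`, lower colors `d` (`true` = ◦,
`false` = •), and an equivalence relation (the blocks) on the points. -/
structure Pt where
  u : List Bool
  d : List Bool
  rel : Setoid (Fin u.length ⊕ Fin d.length)

/-- The disjoint union of two setoids (no relation across the two parts). -/
def sumSetoid {α β : Type*} (s : Setoid α) (t : Setoid β) : Setoid (α ⊕ β) where
  r := Sum.LiftRel s.r t.r
  iseqv := by
    constructor
    · rintro (a | b)
      · exact Sum.LiftRel.inl (s.iseqv.refl a)
      · exact Sum.LiftRel.inr (t.iseqv.refl b)
    · intro x y h
      cases h with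
      | inl h => exact Sum.LiftRel.inl (s.iseqv.symm h)
      | inr h => exact Sum.LiftRel.inr (t.iseqv.symm h)
    · intro x y z h1 h2
      cases h1 with
      | inl h => cases h2 with | inl h' => exact Sum.LiftRel.inl (s.iseqv.trans h h')
      | inr h => cases h2 with | inr h' => exact Sum.LiftRel.inr (t.iseqv.trans h h')

/-- Reindexing for reflection across a vertical axis. -/
def revIdx {w : List Bool} (i : Fin ((w.map (fun b => !b)).reverse).length) :
    Fin w.length := (Fin.cast (by simp) i).rev

/-- The adjoint `p*`: reflection across the horizontal axis. -/
def Pt.star (p : Pt) : Pt := ⟨p.d, p.u, Setoid.comap Sum.swap p.rel⟩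

/-- The conjugate `p̄`: reflection across a vertical axis with colors inverted. -/
def Pt.conj (p : Pt) : Pt :=
  ⟨(p.u.map (fun b => !b)).reverse, (p.d.map (fun b => !b)).reverse,
   Setoid.comap (Sum.map revIdx revIdx) p.rel⟩

/-- Splitting an index of a concatenation. -/
def splitIdx {x y : List Bool} (i : Fin (x ++ y).length) :
    Fin x.length ⊕ Fin y.length := finSumFinEquiv.symm (Fin.cast (by simp) i)

/-- Horizontal concatenation `p ⊙ q`. -/
def Pt.tensor (p q : Pt) : Pt :=
  ⟨p.u ++ q.u, p.d ++ q.d,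
   Setoid.comap
     (fun z => match z with
       | .inl i => (splitIdx i).elim (fun a => .inl (.inl a)) (fun b => .inr (.inl b))
       | .inr j => (splitIdx j).elim (fun a => .inl (.inr a)) (fun b => .inr (.inr b)))
     (sumSetoid p.rel q.rel)⟩

/-- Vertical concatenation `qp` (`p` on top), defined when the lower coloring
of `p` equals the upper coloring of `q`: outer points are connected iff joined
by a chain of strings of `p` and `q` through the middle row; loops are
discarded. -/
def Pt.comp (q p : Pt) (h : p.d = q.u) : Pt :=
  let α := Fin p.u.length ⊕ (Fin p.d.length ⊕ Fin q.d.length)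
  let i12 : Fin p.u.length ⊕ Fin p.d.length → α := Sum.map id Sum.inl
  let i23 : Fin q.u.length ⊕ Fin q.d.length → α := fun z =>
    match z with
    | .inl a => .inr (.inl (Fin.cast (by rw [h]) a))
    | .inr b => .inr (.inr b)
  let R : α → α → Prop := fun a b =>
    (∃ x y, i12 x = a ∧ i12 y = b ∧ p.rel.r x y) ∨
    (∃ x y, i23 x = a ∧ i23 y = b ∧ q.rel.r x y)
  ⟨p.u, q.d, Setoid.comap (Sum.map id Sum.inr) (Relation.EqvGen.setoid R)⟩

/-- A projective partition: `pp = p = p*`. -/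
def Pt.Projective (p : Pt) : Prop :=
  ∃ h : p.d = p.u, Pt.comp p p h = p ∧ p.star = p

/-- The identity partition with color `c`. -/
def idPt (c : Bool) : Pt := ⟨[c], [c], ⊤⟩

/-- A category of (two-colored) partitions: contains the identity partitions
and the duality partitions (which generate the rotations) and is stable under
horizontal concatenation, vertical concatenation and adjoints. -/
def IsCategory (C : Set Pt) : Prop :=
  (∀ c : Bool, idPt c ∈ C) ∧
  (∀ c : Bool, (⟨[c, !c], [], ⊤⟩ : Pt) ∈ C) ∧
  (∀ c : Bool, (⟨[], [c, !c], ⊤⟩ : Pt) ∈ C) ∧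
  (∀ p ∈ C, ∀ q ∈ C, p.tensor q ∈ C) ∧
  (∀ p ∈ C, p.star ∈ C) ∧
  (∀ p ∈ C, ∀ q ∈ C, ∀ h : Pt.d p = Pt.u q, Pt.comp q p h ∈ C)

/-- A module of projective partitions over a category of partitions `C`:
a set of projective partitions stable under `⊙`, conjugation, and
`p ↦ r p r*` for `r ∈ C` whenever the composition makes sense. -/
def IsModule (C P : Set Pt) : Prop :=
  (∀ p ∈ P, p.Projective) ∧
  (∀ p ∈ P, ∀ q ∈ P, p.tensor q ∈ P) ∧
  (∀ p ∈ P, p.conj ∈ P) ∧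
  (∀ p ∈ P, ∀ r ∈ C, ∀ (h1 : Pt.d r.star = Pt.u p)
    (h2 : Pt.d (Pt.comp p r.star h1) = Pt.u r),
    Pt.comp r (Pt.comp p r.star h1) h2 ∈ P)

/-!
Two points of `s* s` (copies of upper points of `s`) are joined iff they lie in a common block
of `s` and, when they lie on opposite sides, that block also meets the lower row of `s`.
Stacking `s` below `s* s` therefore gives back `s`, i.e. `s s* s = s`, and by associativity
`s* s` is projective. Given `p ∈ 𝒫` and `r ∈ 𝒞`, put `s = r p`. Since `p p = p` we get
`s p = s`, so `s* s = p r* r p` is dominated by `p` and lies in `𝒫`; and `r p r* = s s*` is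
equivalent to `s* s` in `𝒞` via `s`.
-/

open Relation Function

namespace Relation.EqvGen

variable {α β Φ : Type*}

theorem le_of_equivalence {r s : α → α → Prop} (hs : Equivalence s) (h : r ≤ s) :
    EqvGen r ≤ s :=
  fun _ _ hab => hs.eqvGen_iff.1 (EqvGen.mono h _ _ hab)

theorem map_of_rel {r : α → α → Prop} {s : β → β → Prop} {f : α → β}
    (h : ∀ a b, r a b → EqvGen s (f a) (f b)) {a b : α} {x y : β} (hab : EqvGen r a b)
    (ha : f a = x) (hb : f b = y) : EqvGen s x y :=
  ha ▸ hb ▸ le_of_equivalence ((EqvGen.is_equivalence s).comap f) h a b hab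

theorem eq_or_map_of_map {e : β → α} (he : Injective e) {r : β → β → Prop} {x y : α}
    (hxy : EqvGen (Relation.Map r e e) x y) : x = y ∨ Relation.Map (EqvGen r) e e x y := by
  refine le_of_equivalence (s := fun x y => x = y ∨ Relation.Map (EqvGen r) e e x y)
    ⟨fun _ => .inl rfl, ?_, ?_⟩ ?_ x y hxy
  · rintro _ _ (rfl | ⟨a, b, hab, rfl, rfl⟩)
    exacts [.inl rfl, .inr ⟨b, a, EqvGen.symm _ _ hab, rfl, rfl⟩]
  · rintro _ _ _ (rfl | ⟨a, b, hab, rfl, rfl⟩) (rfl | ⟨c, d, hcd, hc, rfl⟩)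
    · exact .inl rfl
    · exact .inr ⟨c, d, hcd, hc, rfl⟩
    · exact .inr ⟨a, b, hab, rfl, rfl⟩
    · obtain rfl := he hc
      exact .inr ⟨a, d, EqvGen.trans _ _ _ hab hcd, rfl, rfl⟩
  · rintro _ _ ⟨a, b, hab, rfl, rfl⟩
    exact .inr ⟨a, b, .rel _ _ hab, rfl, rfl⟩

/-- Gluing: in a chain of `t`-steps between points of `range g`, every maximal run of `r`-steps
starts and ends in `range g`, where `hr` replaces it by an `s`-chain. -/
theorem of_glue {e : β → Φ} {g : α → Φ} (he : Injective e) (hg : Injective g)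
    {r : β → β → Prop} {s : α → α → Prop} {t : Φ → Φ → Prop}
    (ht : ∀ x y, t x y → Relation.Map r e e x y ∨ Relation.Map s g g x y)
    (hr : ∀ a b, Relation.Map (EqvGen r) e e (g a) (g b) → EqvGen s a b) {a b : α}
    (hab : EqvGen t (g a) (g b)) : EqvGen s a b := by
  have key : ∀ a b, EqvGen (Relation.Map r e e) (g a) (g b) → EqvGen s a b := fun a b h =>
    (eq_or_map_of_map he h).elim (fun h => hg h ▸ EqvGen.refl _) (hr a b)
  let ω : Φ → Φ → Prop := fun x y => EqvGen (Relation.Map r e e) x y ∨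
    ∃ a b, EqvGen (Relation.Map r e e) x (g a) ∧ EqvGen s a b ∧
      EqvGen (Relation.Map r e e) (g b) y
  have hω : Equivalence ω := by
    refine ⟨fun _ => .inl (EqvGen.refl _), ?_, ?_⟩
    · rintro _ _ (h | ⟨a, b, h₁, h₂, h₃⟩)
      exacts [.inl (EqvGen.symm _ _ h),
        .inr ⟨b, a, EqvGen.symm _ _ h₃, EqvGen.symm _ _ h₂, EqvGen.symm _ _ h₁⟩]
    · rintro _ _ _ (h | ⟨a, b, h₁, h₂, h₃⟩) (h' | ⟨c, d, h₁', h₂', h₃'⟩)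
      · exact .inl (EqvGen.trans _ _ _ h h')
      · exact .inr ⟨c, d, EqvGen.trans _ _ _ h h₁', h₂', h₃'⟩
      · exact .inr ⟨a, b, h₁, h₂, EqvGen.trans _ _ _ h₃ h'⟩
      · refine .inr ⟨a, d, h₁, ?_, h₃'⟩
        exact EqvGen.trans _ _ _ h₂
          (EqvGen.trans _ _ _ (key b c (EqvGen.trans _ _ _ h₃ h₁')) h₂')
  have htω : t ≤ ω := fun x y hxy => (ht x y hxy).elim (fun h => .inl (.rel _ _ h))
    fun ⟨a, b, h, ha, hb⟩ =>
      .inr ⟨a, b, ha ▸ EqvGen.refl _, .rel _ _ h, hb ▸ EqvGen.refl _⟩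
  rcases le_of_equivalence hω htω _ _ hab with h | ⟨c, d, h₁, h₂, h₃⟩
  · exact key a b h
  · exact EqvGen.trans _ _ _ (key a c h₁) (EqvGen.trans _ _ _ h₂ (key d b h₃))

end Relation.EqvGen

namespace Pt

theorem ext_rel {u d : List Bool} {r r' : Setoid (Fin u.length ⊕ Fin d.length)}
    (h : ∀ x y, r.r x y ↔ r'.r x y) : Pt.mk u d r = Pt.mk u d r' := by
  rw [Setoid.ext h]

theorem comp_congr {q q' p p' : Pt} (hq : q = q') (hp : p = p') (h : p.d = q.u)
    (h' : p'.d = q'.u) : Pt.comp q p h = Pt.comp q' p' h' := by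
  subst hq hp
  rfl

theorem star_star (p : Pt) : p.star.star = p :=
  ext_rel fun x y => by rcases x with _ | _ <;> rcases y with _ | _ <;> rfl

section Comp

variable (q p : Pt) (h : p.d = q.u)

-- `CompPts`, `inTop`, `inBot` and `compGen` copy the local definitions inside `Pt.comp`, so that
-- `comp_rel_iff` holds by `Iff.rfl`.
abbrev CompPts : Type := Fin p.u.length ⊕ (Fin p.d.length ⊕ Fin q.d.length)

def inTop : Fin p.u.length ⊕ Fin p.d.length → CompPts q p := Sum.map id Sum.inl

def inBot : Fin q.u.length ⊕ Fin q.d.length → CompPts q p := fun z =>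
  match z with
  | .inl a => .inr (.inl (Fin.cast (by rw [h]) a))
  | .inr b => .inr (.inr b)

def outer : Fin p.u.length ⊕ Fin q.d.length → CompPts q p := Sum.map id Sum.inr

def compGen (a b : CompPts q p) : Prop :=
  (∃ x y, inTop q p x = a ∧ inTop q p y = b ∧ p.rel.r x y) ∨
  (∃ x y, inBot q p h x = a ∧ inBot q p h y = b ∧ q.rel.r x y)

theorem comp_rel_iff (x y : Fin p.u.length ⊕ Fin q.d.length) :
    (Pt.comp q p h).rel.r x y ↔ EqvGen (compGen q p h) (outer q p x) (outer q p y) :=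
  Iff.rfl

def flipPts : CompPts p.star q.star → CompPts q p :=
  Sum.elim (Sum.inr ∘ Sum.inr)
    (Sum.elim (Sum.inr ∘ Sum.inl ∘ Fin.cast (congrArg List.length h.symm)) Sum.inl)

def unflipPts : CompPts q p → CompPts p.star q.star :=
  Sum.elim (Sum.inr ∘ Sum.inr)
    (Sum.elim (Sum.inr ∘ Sum.inl ∘ Fin.cast (congrArg List.length h)) Sum.inl)

theorem star_comp : (Pt.comp q p h).star = Pt.comp p.star q.star h.symm := by
  refine ext_rel fun (x y : Fin q.d.length ⊕ Fin p.u.length) => ?_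
  change EqvGen (compGen q p h) (outer q p x.swap) (outer q p y.swap) ↔
    EqvGen (compGen p.star q.star h.symm) (outer _ _ x) (outer _ _ y)
  have gen_flip : ∀ a b, compGen p.star q.star h.symm a b →
      EqvGen (compGen q p h) (flipPts q p h a) (flipPts q p h b) := by
    rintro _ _ (⟨x, y, rfl, rfl, hxy⟩ | ⟨x, y, rfl, rfl, hxy⟩) <;> refine .rel _ _ ?_
    · exact .inr ⟨x.swap, y.swap, by cases x <;> rfl, by cases y <;> rfl, hxy⟩
    · exact .inl ⟨x.swap, y.swap, by cases x <;> rfl, by cases y <;> rfl, hxy⟩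
  have gen_unflip : ∀ a b, compGen q p h a b →
      EqvGen (compGen p.star q.star h.symm) (unflipPts q p h a) (unflipPts q p h b) := by
    rintro _ _ (⟨x, y, rfl, rfl, hxy⟩ | ⟨x, y, rfl, rfl, hxy⟩) <;> refine .rel _ _ ?_
    · exact .inr ⟨x.swap, y.swap, by cases x <;> rfl, by cases y <;> rfl,
        by rcases x with _ | _ <;> rcases y with _ | _ <;> exact hxy⟩
    · exact .inl ⟨x.swap, y.swap, by cases x <;> rfl, by cases y <;> rfl,
        by rcases x with _ | _ <;> rcases y with _ | _ <;> exact hxy⟩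
  have flip_outer : ∀ z : Fin q.d.length ⊕ Fin p.u.length,
      flipPts q p h (outer _ _ z) = outer q p z.swap := by
    rintro (_ | _) <;> rfl
  have unflip_outer : ∀ z : Fin q.d.length ⊕ Fin p.u.length,
      unflipPts q p h (outer q p z.swap) = outer _ _ z := by
    rintro (_ | _) <;> rfl
  exact ⟨fun hxy => EqvGen.map_of_rel gen_unflip hxy (unflip_outer x) (unflip_outer y),
    fun hxy => EqvGen.map_of_rel gen_flip hxy (flip_outer x) (flip_outer y)⟩

end Comp

section Assoc

variable (a b c : Pt) (hab : a.d = b.u) (hbc : b.d = c.u)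

/-- The four rows of points of the diagram of `c b a`. -/
abbrev StackPts : Type :=
  Fin a.u.length ⊕ (Fin a.d.length ⊕ (Fin b.d.length ⊕ Fin c.d.length))

def stackAB : CompPts b a → StackPts a b c := Sum.map id (Sum.map id Sum.inl)

def stackBC : CompPts c b → StackPts a b c :=
  Sum.inr ∘ Sum.map (Fin.cast (congrArg List.length hab.symm)) id

def stackAB_C : Fin a.u.length ⊕ (Fin b.d.length ⊕ Fin c.d.length) → StackPts a b c :=
  Sum.map id Sum.inr

def stackA_BC : Fin a.u.length ⊕ (Fin a.d.length ⊕ Fin c.d.length) → StackPts a b c :=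
  Sum.map id (Sum.map id Sum.inr)

def stackOuter : Fin a.u.length ⊕ Fin c.d.length → StackPts a b c :=
  Sum.map id (Sum.inr ∘ Sum.inr)

def stackGen (x y : StackPts a b c) : Prop :=
  Relation.Map a.rel.r (stackAB a b c ∘ inTop b a) (stackAB a b c ∘ inTop b a) x y ∨
  Relation.Map b.rel.r (stackBC a b c hab ∘ inTop c b) (stackBC a b c hab ∘ inTop c b) x y ∨
  Relation.Map c.rel.r (stackBC a b c hab ∘ inBot c b hbc)
    (stackBC a b c hab ∘ inBot c b hbc) x y

theorem rel_comp_comp_iff (x y : Fin a.u.length ⊕ Fin c.d.length) :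
    (Pt.comp c (Pt.comp b a hab) hbc).rel.r x y ↔
      EqvGen (stackGen a b c hab hbc) (stackOuter a b c x) (stackOuter a b c y) := by
  have hAB : ∀ z,
      stackAB a b c (outer b a z) = stackAB_C a b c (inTop c (Pt.comp b a hab) z) := by
    rintro (_ | _) <;> rfl
  have hout : ∀ z : Fin a.u.length ⊕ Fin c.d.length,
      stackAB_C a b c (outer c (Pt.comp b a hab) z) = stackOuter a b c z := by
    rintro (_ | _) <;> rfl
  refine (comp_rel_iff c (Pt.comp b a hab) hbc x y).trans ?_
  rw [← hout x, ← hout y]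
  constructor
  · refine fun hxy => EqvGen.map_of_rel ?_ hxy rfl rfl
    rintro _ _ (⟨x, y, rfl, rfl, hxy⟩ | ⟨x, y, rfl, rfl, hxy⟩)
    · refine EqvGen.map_of_rel ?_ hxy (hAB x) (hAB y)
      rintro _ _ (⟨u, v, rfl, rfl, huv⟩ | ⟨u, v, rfl, rfl, huv⟩) <;> refine .rel _ _ ?_
      · exact .inl ⟨u, v, huv, rfl, rfl⟩
      · exact .inr (.inl ⟨u, v, huv, by cases u <;> rfl, by cases v <;> rfl⟩)
    · exact .rel _ _ (.inr (.inr ⟨x, y, hxy, by cases x <;> rfl, by cases y <;> rfl⟩))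
  · have decode : ∀ (w : Fin a.u.length ⊕ (Fin a.d.length ⊕ Fin b.d.length))
        (u : Fin a.u.length ⊕ (Fin b.d.length ⊕ Fin c.d.length)),
        stackAB a b c w = stackAB_C a b c u →
        ∃ z, outer b a z = w ∧ inTop c (Pt.comp b a hab) z = u := by
      rintro (i | m | k) (i' | k' | l') h <;> simp [stackAB, stackAB_C] at h
      · exact ⟨.inl i, rfl, by subst h; rfl⟩
      · exact ⟨.inr k, rfl, by subst h; rfl⟩
    refine EqvGen.of_glue (e := stackAB a b c) (g := stackAB_C a b c) (r := compGen b a hab)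
      (Sum.map_injective.2 ⟨injective_id, Sum.map_injective.2 ⟨injective_id, Sum.inl_injective⟩⟩)
      (Sum.map_injective.2 ⟨injective_id, Sum.inr_injective⟩) ?_ ?_
    · rintro _ _ (⟨u, v, huv, rfl, rfl⟩ | ⟨u, v, huv, rfl, rfl⟩ |
        ⟨u, v, huv, rfl, rfl⟩)
      · exact .inl ⟨inTop b a u, inTop b a v, .inl ⟨u, v, rfl, rfl, huv⟩, rfl, rfl⟩
      · exact .inl ⟨inBot b a hab u, inBot b a hab v, .inr ⟨u, v, rfl, rfl, huv⟩,
          by cases u <;> rfl, by cases v <;> rfl⟩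
      · exact .inr ⟨inBot c (Pt.comp b a hab) hbc u, inBot c (Pt.comp b a hab) hbc v,
          .inr ⟨u, v, rfl, rfl, huv⟩, by cases u <;> rfl, by cases v <;> rfl⟩
    · rintro u v ⟨w, w', hww', hw, hw'⟩
      obtain ⟨z, rfl, rfl⟩ := decode w u hw
      obtain ⟨z', rfl, rfl⟩ := decode w' v hw'
      exact .rel _ _ (.inl ⟨z, z', rfl, rfl, hww'⟩)

theorem rel_comp_comp_iff' (x y : Fin a.u.length ⊕ Fin c.d.length) :
    (Pt.comp (Pt.comp c b hbc) a hab).rel.r x y ↔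
      EqvGen (stackGen a b c hab hbc) (stackOuter a b c x) (stackOuter a b c y) := by
  have hBC : ∀ z, stackBC a b c hab (outer c b z) =
      stackA_BC a b c (inBot (Pt.comp c b hbc) a hab z) := by
    rintro (_ | _) <;> rfl
  have hout : ∀ z : Fin a.u.length ⊕ Fin c.d.length,
      stackA_BC a b c (outer (Pt.comp c b hbc) a z) = stackOuter a b c z := by
    rintro (_ | _) <;> rfl
  refine (comp_rel_iff (Pt.comp c b hbc) a hab x y).trans ?_
  rw [← hout x, ← hout y]
  constructor
  · refine fun hxy => EqvGen.map_of_rel ?_ hxy rfl rfl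
    rintro _ _ (⟨x, y, rfl, rfl, hxy⟩ | ⟨x, y, rfl, rfl, hxy⟩)
    · exact .rel _ _ (.inl ⟨x, y, hxy, by cases x <;> rfl, by cases y <;> rfl⟩)
    · refine EqvGen.map_of_rel ?_ hxy (hBC x) (hBC y)
      rintro _ _ (⟨u, v, rfl, rfl, huv⟩ | ⟨u, v, rfl, rfl, huv⟩) <;> refine .rel _ _ ?_
      · exact .inr (.inl ⟨u, v, huv, rfl, rfl⟩)
      · exact .inr (.inr ⟨u, v, huv, rfl, rfl⟩)
  · have decode : ∀ (w : Fin b.u.length ⊕ (Fin b.d.length ⊕ Fin c.d.length))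
        (u : Fin a.u.length ⊕ (Fin a.d.length ⊕ Fin c.d.length)),
        stackBC a b c hab w = stackA_BC a b c u →
        ∃ z, outer c b z = w ∧ inBot (Pt.comp c b hbc) a hab z = u := by
      rintro (m | k | l) (i' | m' | l') h <;> simp [stackBC, stackA_BC, Fin.ext_iff] at h
      · exact ⟨.inl m, rfl, congrArg (Sum.inr ∘ Sum.inl) (Fin.ext h)⟩
      · exact ⟨.inr l, rfl, congrArg (Sum.inr ∘ Sum.inr) (Fin.ext h)⟩
    refine EqvGen.of_glue (e := stackBC a b c hab) (g := stackA_BC a b c) (r := compGen c b hbc)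
      (Sum.inr_injective.comp (Sum.map_injective.2 ⟨Fin.cast_injective _, injective_id⟩))
      (Sum.map_injective.2 ⟨injective_id, Sum.map_injective.2 ⟨injective_id, Sum.inr_injective⟩⟩)
      ?_ ?_
    · rintro _ _ (⟨u, v, huv, rfl, rfl⟩ | ⟨u, v, huv, rfl, rfl⟩ |
        ⟨u, v, huv, rfl, rfl⟩)
      · exact .inr ⟨inTop (Pt.comp c b hbc) a u, inTop (Pt.comp c b hbc) a v,
          .inl ⟨u, v, rfl, rfl, huv⟩, by cases u <;> rfl, by cases v <;> rfl⟩
      · exact .inl ⟨inTop c b u, inTop c b v, .inl ⟨u, v, rfl, rfl, huv⟩, rfl, rfl⟩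
      · exact .inl ⟨inBot c b hbc u, inBot c b hbc v, .inr ⟨u, v, rfl, rfl, huv⟩, rfl, rfl⟩
    · rintro u v ⟨w, w', hww', hw, hw'⟩
      obtain ⟨z, rfl, rfl⟩ := decode w u hw
      obtain ⟨z', rfl, rfl⟩ := decode w' v hw'
      exact .rel _ _ (.inr ⟨z, z', rfl, rfl, hww'⟩)

theorem comp_assoc : Pt.comp c (Pt.comp b a hab) hbc = Pt.comp (Pt.comp c b hbc) a hab :=
  ext_rel fun x y => (rel_comp_comp_iff a b c hab hbc x y).trans
    (rel_comp_comp_iff' a b c hab hbc x y).symm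

end Assoc

section StarCompSelf

variable (s : Pt)

def MeetsLower (a : Fin s.u.length ⊕ Fin s.d.length) : Prop :=
  ∃ m, s.rel.r a (.inr m)

variable {s}

theorem MeetsLower.of_rel {a b : Fin s.u.length ⊕ Fin s.d.length} (hab : s.rel.r a b)
    (hb : a.isRight ∨ b.isRight) : s.MeetsLower a := by
  rcases hb with ha | hb
  · obtain ⟨m, rfl⟩ := Sum.isRight_iff.1 ha
    exact ⟨m, s.rel.iseqv.refl _⟩
  · obtain ⟨m, rfl⟩ := Sum.isRight_iff.1 hb
    exact ⟨m, hab⟩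

variable (s)

/-- Candidate for the blocks of a stack of copies of `s` and `s*`: `f x` is the point of `s` of
which `x` is a copy and `row x` the row of `x`. -/
def layeredRel {X : Type*} (f : X → Fin s.u.length ⊕ Fin s.d.length) (row : X → ℕ)
    (x y : X) : Prop :=
  s.rel.r (f x) (f y) ∧ (row x ≠ row y → s.MeetsLower (f x))

theorem layeredRel_equivalence {X : Type*} (f : X → Fin s.u.length ⊕ Fin s.d.length)
    (row : X → ℕ) : Equivalence (s.layeredRel f row) := by
  have hs := s.rel.iseqv
  refine ⟨fun x => ⟨hs.refl _, fun h => absurd rfl h⟩, ?_, ?_⟩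
  · rintro x y ⟨hxy, hlow⟩
    refine ⟨hs.symm hxy, fun h => ?_⟩
    obtain ⟨m, hm⟩ := hlow (Ne.symm h)
    exact ⟨m, hs.trans (hs.symm hxy) hm⟩
  · rintro x y z ⟨hxy, hlow⟩ ⟨hyz, hlow'⟩
    refine ⟨hs.trans hxy hyz, fun h => ?_⟩
    by_cases hrow : row x = row y
    · obtain ⟨m, hm⟩ := hlow' (hrow ▸ h)
      exact ⟨m, hs.trans hxy hm⟩
    · exact hlow hrow

theorem rel_star_comp_self_iff (x y : Fin s.u.length ⊕ Fin s.u.length) :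
    (Pt.comp s.star s rfl).rel.r x y ↔
      s.layeredRel (fun z => .inl (z.elim id id)) (Sum.elim (fun _ => 0) (fun _ => 1)) x y := by
  have hs := s.rel.iseqv
  refine (comp_rel_iff s.star s rfl x y).trans ⟨fun h => ?_, fun h => ?_⟩
  · -- the middle row gets label `2`, so that the outer rows keep the labels of the statement
    have := EqvGen.le_of_equivalence (s.layeredRel_equivalence
      (Sum.elim Sum.inl (Sum.elim Sum.inr Sum.inl))
      (Sum.elim (fun _ => 0) (Sum.elim (fun _ => 2) (fun _ => 1)))) ?_ _ _ h
    · rcases x with _ | _ <;> rcases y with _ | _ <;> exact this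
    rintro _ _ (⟨x, y, rfl, rfl, hxy⟩ | ⟨x, y, rfl, rfl, hxy⟩) <;>
      rcases x with x | x <;> rcases y with y | y <;>
      refine ⟨hxy, fun hne => MeetsLower.of_rel hxy ?_⟩ <;>
      first | exact absurd rfl hne | exact .inl rfl | exact .inr rfl
  · have key : ∀ i j, s.layeredRel (fun z => .inl (z.elim id id))
        (Sum.elim (fun _ => 0) (fun _ => 1)) (.inl i) (.inr j) →
        EqvGen (compGen s.star s rfl) (outer _ _ (.inl i)) (outer _ _ (.inr j)) := by
      rintro i j ⟨hij, hlow⟩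
      obtain ⟨m, hm⟩ := hlow (by simp)
      exact EqvGen.trans _ _ _ (.rel _ _ (.inl ⟨.inl i, .inr m, rfl, rfl, hm⟩))
        (.rel _ _ (.inr ⟨.inl m, .inr j, rfl, rfl, hs.trans (hs.symm hm) hij⟩))
    rcases x with i | i <;> rcases y with j | j
    · exact .rel _ _ (.inl ⟨.inl i, .inl j, rfl, rfl, h.1⟩)
    · exact key i j h
    · exact EqvGen.symm _ _ (key j i ((s.layeredRel_equivalence _ _).symm h))
    · exact .rel _ _ (.inr ⟨.inr i, .inr j, rfl, rfl, h.1⟩)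

theorem comp_comp_star_self : Pt.comp s (Pt.comp s.star s rfl) rfl = s := by
  have hs := s.rel.iseqv
  have hQ := fun i j => (rel_star_comp_self_iff s i j).2
  refine ext_rel fun x y => (comp_rel_iff s _ rfl x y).trans ⟨fun h => ?_, fun h => ?_⟩
  · have := EqvGen.le_of_equivalence (s.layeredRel_equivalence
      (Sum.elim Sum.inl (Sum.elim Sum.inl Sum.inr))
      (Sum.elim (fun _ => 0) (Sum.elim (fun _ => 1) (fun _ => 2)))) ?_ _ _ h
    · rcases x with _ | _ <;> rcases y with _ | _ <;> exact this.1
    rintro _ _ (⟨x, y, rfl, rfl, hxy⟩ | ⟨x, y, rfl, rfl, hxy⟩)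
    · have := (rel_star_comp_self_iff s x y).1 hxy
      rcases x with _ | _ <;> rcases y with _ | _ <;> exact this
    · rcases x with x | x <;> rcases y with y | y <;>
        refine ⟨hxy, fun hne => MeetsLower.of_rel hxy ?_⟩ <;>
        first | exact absurd rfl hne | exact .inl rfl | exact .inr rfl
  · have key : ∀ i m, s.rel.r (.inl i) (.inr m) →
        EqvGen (compGen s _ rfl) (outer s (Pt.comp s.star s rfl) (.inl i)) (outer _ _ (.inr m)) :=
      fun i m h => EqvGen.trans _ _ _
        (.rel _ _ (.inl ⟨.inl i, .inr i, rfl, rfl, hQ _ _ ⟨hs.refl _, fun _ => ⟨m, h⟩⟩⟩))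
        (.rel _ _ (.inr ⟨.inl i, .inr m, rfl, rfl, h⟩))
    rcases x with i | m <;> rcases y with j | n
    · exact .rel _ _ (.inl ⟨.inl i, .inl j, rfl, rfl, hQ _ _ ⟨h, (absurd rfl ·)⟩⟩)
    · exact key i n h
    · exact EqvGen.symm _ _ (key j m (hs.symm h))
    · exact .rel _ _ (.inr ⟨.inr m, .inr n, rfl, rfl, h⟩)

theorem projective_star_comp_self : (Pt.comp s.star s rfl).Projective := by
  refine ⟨rfl, ?_, ?_⟩
  · calc Pt.comp (Pt.comp s.star s rfl) (Pt.comp s.star s rfl) rfl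
        = Pt.comp s.star (Pt.comp s (Pt.comp s.star s rfl) rfl) rfl :=
          (comp_assoc _ _ _ rfl rfl).symm
      _ = Pt.comp s.star s rfl := comp_congr rfl (comp_comp_star_self s) rfl rfl
  · exact (star_comp _ _ rfl).trans (comp_congr rfl (star_star s) rfl rfl)

end StarCompSelf

theorem projective_comp_star_self (s : Pt) : (Pt.comp s s.star rfl).Projective := by
  have h := projective_star_comp_self s.star
  rwa [comp_congr (star_star s) rfl rfl rfl] at h

theorem comp_comp_eq_of_comp_eq {t s p : Pt} {h : p.d = s.u} {h' : s.d = t.u}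
    (hsp : Pt.comp s p h = s) : Pt.comp (Pt.comp t s h') p h = Pt.comp t s h' :=
  (comp_assoc p s t h h').symm.trans (comp_congr rfl hsp h' h')

theorem comp_eq_of_comp_eq_of_star_eq {p q : Pt} (hp : p.star = p) (hq : q.star = q)
    {h : q.d = p.u} {h' : p.d = q.u} (hqp : Pt.comp q p h' = q) : Pt.comp p q h = q :=
  calc Pt.comp p q h = (Pt.comp q.star p.star h.symm).star := by rw [← star_comp, star_star]
    _ = q := by rw [comp_congr hq hp h.symm h', hqp, hq]

theorem Projective.comp_comp_self {p r : Pt} (hp : p.Projective) (h : p.d = r.u) :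
    Pt.comp (Pt.comp r p h) p hp.1 = Pt.comp r p h :=
  comp_comp_eq_of_comp_eq hp.2.1

theorem Projective.comp_comp_star {p r : Pt} (hp : p.Projective) (h₁ : r.star.d = p.u)
    (h₂ : p.d = r.u) :
    Pt.comp (Pt.comp r p h₂) (Pt.comp r p h₂).star rfl =
      Pt.comp r (Pt.comp p r.star h₁) h₂ := by
  have hstar : (Pt.comp r p h₂).star = Pt.comp p r.star h₁ :=
    (star_comp r p h₂).trans (comp_congr hp.2.2 rfl _ _)
  calc Pt.comp (Pt.comp r p h₂) (Pt.comp r p h₂).star rfl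
      = Pt.comp (Pt.comp r p h₂) (Pt.comp p r.star h₁) hp.1 := comp_congr rfl hstar _ _
    _ = Pt.comp (Pt.comp (Pt.comp r p h₂) p hp.1) r.star h₁ := comp_assoc _ _ _ _ _
    _ = Pt.comp (Pt.comp r p h₂) r.star h₁ := comp_congr (hp.comp_comp_self h₂) rfl _ _
    _ = Pt.comp r (Pt.comp p r.star h₁) h₂ := (comp_assoc _ _ _ _ _).symm

end Pt

theorem IsCategory.star_mem {C : Set Pt} (hC : IsCategory C) {p : Pt} (hp : p ∈ C) :
    p.star ∈ C :=
  hC.2.2.2.2.1 p hp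

theorem IsCategory.comp_mem {C : Set Pt} (hC : IsCategory C) {q p : Pt} (hq : q ∈ C)
    (hp : p ∈ C) (h : p.d = q.u) : Pt.comp q p h ∈ C :=
  hC.2.2.2.2.2 p hp q hq h

/-- conversely, if `𝒫 ⊆ Proj_𝒞` is stable under `⊙` and
conjugation, and closed under equivalence in `𝒞` and under domination, then
`𝒫` is a module of projective partitions over `𝒞`. -/
theorem stmt15 (C P : Set Pt) (hC : IsCategory C)
    (hsub : ∀ p ∈ P, p ∈ C ∧ p.Projective)
    (htens : ∀ p ∈ P, ∀ q ∈ P, p.tensor q ∈ P)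
    (hconj : ∀ p ∈ P, p.conj ∈ P)
    (hequiv : ∀ p ∈ P, ∀ q : Pt, q ∈ C → q.Projective →
      (∃ r ∈ C, Pt.comp r.star r rfl = p ∧ Pt.comp r r.star rfl = q) → q ∈ P)
    (hdom : ∀ p ∈ P, ∀ q : Pt, q ∈ C → q.Projective →
      ∀ (h1 : Pt.d p = Pt.u q) (h2 : Pt.d q = Pt.u p),
      Pt.comp q p h1 = q → Pt.comp p q h2 = q → q ∈ P) :
    IsModule C P := by
  refine ⟨fun p hp => (hsub p hp).2, htens, hconj, fun p hp r hr h₁ h₂ => ?_⟩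
  obtain ⟨hpC, hproj⟩ := hsub p hp
  set s := Pt.comp r p h₂
  have hsC : s ∈ C := hC.comp_mem hr hpC h₂
  have hQp : Pt.comp (s.star.comp s rfl) p hproj.1 = s.star.comp s rfl :=
    Pt.comp_comp_eq_of_comp_eq (hproj.comp_comp_self h₂)
  have hQ : s.star.comp s rfl ∈ P :=
    hdom p hp _ (hC.comp_mem (hC.star_mem hsC) hsC rfl) (Pt.projective_star_comp_self s)
      hproj.1 rfl hQp
      (Pt.comp_eq_of_comp_eq_of_star_eq hproj.2.2 (Pt.projective_star_comp_self s).2.2 hQp)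
  refine hequiv _ hQ _ ?_ ?_ ⟨s, hsC, rfl, hproj.comp_comp_star h₁ h₂⟩
  · exact hC.comp_mem hr (hC.comp_mem hpC (hC.star_mem hr) h₁) h₂
  · exact hproj.comp_comp_star h₁ h₂ ▸ Pt.projective_comp_star_self s
end

section
/- When B = ℂ^N with the uniform δ-form (δ² = N), the quantum graph 𝒢_k = (B_k, ψ_k, 𝒜_k) is isomorphic to the classical rooted N-regular tree of depth k: identifying the standard basis of (ℂ^N)^{⊗p} with tuples (i₁,…,i_p) ∈ {1,…,N}^p, the adjacency operator 𝒜_k − Id connects each vertex (i₁,…,i_p) with p < k to precisely its N children (i₁,…,i_p,i), i = 1,…,N, and the root (empty tuple) to the vertices (i). -/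
open scoped TensorProduct

/-- Bundled ℂ-algebra, used to define iterated tensor powers. -/
structure Pack where
  car : Type
  ring : Ring car
  alg : Algebra ℂ car

/-- The iterated tensor powers of `B` (with `B^{⊗0} = ℂ`), bundled with their
algebra structure. -/
noncomputable def packPow (B : Type) [Ring B] [Algebra ℂ B] : ℕ → Pack
  | 0 => ⟨ℂ, inferInstance, inferInstance⟩
  | n + 1 =>
    let P := packPow B n
    letI := P.ring
    letI := P.alg
    ⟨P.car ⊗[ℂ] B, inferInstance, inferInstance⟩

/-- `B^{⊗n}`. -/
noncomputable abbrev Bpow (B : Type) [Ring B] [Algebra ℂ B] (n : ℕ) : Type :=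
  (packPow B n).car

noncomputable instance (B : Type) [Ring B] [Algebra ℂ B] (n : ℕ) :
    Ring (Bpow B n) := (packPow B n).ring

noncomputable instance (B : Type) [Ring B] [Algebra ℂ B] (n : ℕ) :
    Algebra ℂ (Bpow B n) := (packPow B n).alg

variable (B : Type) [Ring B] [Algebra ℂ B]

/-- `ψ^{⊗n} : B^{⊗n} → ℂ`. -/
noncomputable def psiPow (ψ : B →ₗ[ℂ] ℂ) : (n : ℕ) → Bpow B n →ₗ[ℂ] ℂ
  | 0 => LinearMap.id
  | n + 1 =>
    (TensorProduct.lid ℂ ℂ).toLinearMap ∘ₗ TensorProduct.map (psiPow ψ n) ψ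

/-- The map `A_n : B^{⊗n} → B^{⊗(n+1)}`, `x ↦ x ⊗ 1`. -/
noncomputable def tensOne (n : ℕ) : Bpow B n →ₗ[ℂ] Bpow B (n + 1) :=
  (TensorProduct.mk ℂ (Bpow B n) B).flip 1

/-- `B_k = ⊕_{i=0}^{k} B^{⊗i}`. -/
abbrev Bk (k : ℕ) : Type := ∀ i : Fin (k + 1), Bpow B (i : ℕ)

/-- The adjacency operator `𝒜_k = Id + Σ_{i=0}^{k-1} A_i` of the rooted
`(B,ψ)`-regular quantum tree of depth `k`. -/
noncomputable def Ak (k : ℕ) : Bk B k →ₗ[ℂ] Bk B k :=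
  LinearMap.id + ∑ i : Fin k,
    (LinearMap.single ℂ (fun j : Fin (k + 1) => Bpow B (j : ℕ)) i.succ)
      ∘ₗ (tensOne B (i : ℕ))
      ∘ₗ (LinearMap.proj i.castSucc)

/-- `δ_k = Σ_{i=0}^k δ^i`. -/
def delk (δ : ℝ) (k : ℕ) : ℝ := ∑ i ∈ Finset.range (k + 1), δ ^ i

/-- The state `ψ_k = δ_k⁻¹ Σ_{i=0}^k δ^i ψ^{⊗i}` on `B_k`. -/
noncomputable def psiK (ψ : B →ₗ[ℂ] ℂ) (δ : ℝ) (k : ℕ) : Bk B k →ₗ[ℂ] ℂ :=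
  ((delk δ k : ℂ)⁻¹) • ∑ i : Fin (k + 1),
    ((δ : ℂ) ^ (i : ℕ)) • ((psiPow B ψ (i : ℕ)) ∘ₗ (LinearMap.proj i))

/-- Positivity in a `*`-ring: sums of elements `y* y`. -/
def IsPosElem {A : Type} [Ring A] [StarRing A] (x : A) : Prop :=
  ∃ L : List A, x = (L.map fun y => star y * y).sum

/-- Positivity for matrices over a `*`-ring: sums of elements `Yᴴ Y`. -/
def MatPos {A : Type} [Ring A] [StarRing A] {n : ℕ}
    (M : Matrix (Fin n) (Fin n) A) : Prop :=
  ∃ L : List (Matrix (Fin n) (Fin n) A), M = (L.map fun Y => Y.conjTranspose * Y).sum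

/-- Complete positivity of a linear map on a `*`-algebra. -/
def IsCP {A : Type} [Ring A] [StarRing A] [Module ℂ A] (φ : A →ₗ[ℂ] A) : Prop :=
  ∀ n : ℕ, ∀ M : Matrix (Fin n) (Fin n) A, MatPos M → MatPos (M.map φ)

open scoped Classical

/-- The standard basis vector of `(ℂ^N)^{⊗p}` labelled by a tuple. -/
noncomputable def bas (N : ℕ) : (p : ℕ) → (Fin p → Fin N) → Bpow (Fin N → ℂ) p
  | 0, _ => (1 : Bpow (Fin N → ℂ) 0)
  | p + 1, t => show Bpow (Fin N → ℂ) (p + 1) from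
      (bas N p (fun m => t m.castSucc)) ⊗ₜ[ℂ] (Pi.single (t (Fin.last p)) (1 : ℂ))

/-- Vertices of the rooted `N`-regular tree of depth `k`: tuples of length at
most `k` with entries in `{1,…,N}`. -/
abbrev Vtx (N k : ℕ) := Σ p : Fin (k + 1), (Fin (p : ℕ) → Fin N)

/-- `v` is the parent of `w` (equivalently, `w` is a child of `v`, i.e. a
one-letter extension of the tuple `v`). -/
def EdgeRel {N k : ℕ} (v w : Vtx N k) : Prop :=
  ∃ h : (v.1 : ℕ) + 1 = (w.1 : ℕ),
    ∀ m : Fin (v.1 : ℕ), v.2 m = w.2 (Fin.castLE (by omega) m)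

/-- The uniform state on `ℂ^N` (the `δ`-form with `δ² = N`). -/
noncomputable def unifState (N : ℕ) : (Fin N → ℂ) →ₗ[ℂ] ℂ :=
  ((N : ℂ)⁻¹) • ∑ i : Fin N, LinearMap.proj i

/-!
Evaluating `f₁ ⊗ ⋯ ⊗ f_p ∈ (ℂ^ι)^{⊗p}` at a tuple `s ∈ ι^p` as `f₁(s₁) ⋯ f_p(s_p)` is an
algebra map `(ℂ^N)^{⊗p} → ℂ^{N^p}` sending the standard basis tensor of `t` to the indicator of
`t`; it is onto, hence bijective by counting dimensions. Under it `x ↦ x ⊗ 1` becomes pullback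
along `Fin.init`, i.e. along the parent map of the tree, so `𝒜_k - Id` adds to each vertex the
value at its parent; and `ψ^{⊗p}` becomes the uniform average `N^{-p} ∑_s`, because the uniform
state is `N⁻¹ ∑_a`.
-/

theorem Ak_apply (k : ℕ) (f : Bk B k) :
    Ak B k f = f + ∑ i : Fin k, Pi.single i.succ (tensOne B i (f i.castSucc)) := by
  simp only [Ak, LinearMap.add_apply, LinearMap.id_apply, LinearMap.sum_apply]
  rfl

theorem psiK_apply (ψ : B →ₗ[ℂ] ℂ) (δ : ℝ) (k : ℕ) (x : Bk B k) :
    psiK B ψ δ k x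
      = ∑ i : Fin (k + 1), (delk δ k : ℂ)⁻¹ * (δ : ℂ) ^ (i : ℕ) * psiPow B ψ i (x i) := by
  simp [psiK, Finset.mul_sum, mul_assoc]

theorem psiPow_tmul (ψ : B →ₗ[ℂ] ℂ) (p : ℕ) (y : Bpow B p) (b : B) :
    psiPow B ψ (p + 1) (y ⊗ₜ[ℂ] b) = psiPow B ψ p y * ψ b := by
  change TensorProduct.lid ℂ ℂ (TensorProduct.map (psiPow B ψ p) ψ (y ⊗ₜ[ℂ] b)) = _
  rw [TensorProduct.map_tmul, TensorProduct.lid_tmul, smul_eq_mul]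

/- `TensorProduct.induction_on` itself leaves goals whose `0` and `+` are those of the tensor
product, which `simp` does not identify with the (only definitionally equal) ones of `Bpow`. -/
@[elab_as_elim]
theorem Bpow.induction_on_succ {p : ℕ} {P : Bpow B (p + 1) → Prop} (x : Bpow B (p + 1))
    (zero : P 0) (tmul : ∀ y b, P (show Bpow B (p + 1) from y ⊗ₜ[ℂ] b))
    (add : ∀ x y, P x → P y → P (x + y)) : P x :=
  TensorProduct.induction_on x zero tmul add

instance Bpow.finiteDimensional_pi {ι : Type} [Fintype ι] :
    ∀ p, FiniteDimensional ℂ (Bpow (ι → ℂ) p)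
  | 0 => inferInstanceAs (FiniteDimensional ℂ ℂ)
  | p + 1 =>
    haveI := Bpow.finiteDimensional_pi (ι := ι) p
    inferInstanceAs (FiniteDimensional ℂ (Bpow (ι → ℂ) p ⊗[ℂ] (ι → ℂ)))

theorem Bpow.finrank_pi (ι : Type) [Fintype ι] (p : ℕ) :
    Module.finrank ℂ (Bpow (ι → ℂ) p) = Fintype.card ι ^ p := by
  induction p with
  | zero => exact Module.finrank_self ℂ
  | succ p ih =>
    change Module.finrank ℂ (Bpow (ι → ℂ) p ⊗[ℂ] (ι → ℂ)) = _
    rw [Module.finrank_tensorProduct, ih, Module.finrank_fintype_fun_eq_card, pow_succ]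

section TupleEvaluation

variable {ι : Type}

def precompAlgHom {κ : Type} (σ : κ → ι) : (ι → ℂ) →ₐ[ℂ] (κ → ℂ) :=
  AlgHom.pi fun s => Pi.evalAlgHom ℂ _ (σ s)

noncomputable def tupleEval : (p : ℕ) → Bpow (ι → ℂ) p →ₐ[ℂ] ((Fin p → ι) → ℂ)
  | 0 => Algebra.ofId ℂ _
  | p + 1 =>
    Algebra.TensorProduct.lift ((precompAlgHom Fin.init).comp (tupleEval p))
      (precompAlgHom fun s => s (Fin.last p)) fun _ _ => .all _ _

theorem tupleEval_tmul (p : ℕ) (y : Bpow (ι → ℂ) p) (f : ι → ℂ) (s : Fin (p + 1) → ι) :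
    tupleEval (p + 1) (y ⊗ₜ[ℂ] f) s = tupleEval p y (Fin.init s) * f (s (Fin.last p)) :=
  rfl

theorem tupleEval_tensOne (p : ℕ) (y : Bpow (ι → ℂ) p) (s : Fin (p + 1) → ι) :
    tupleEval (p + 1) (tensOne (ι → ℂ) p y) s = tupleEval p y (Fin.init s) := by
  rw [show tensOne (ι → ℂ) p y = y ⊗ₜ[ℂ] 1 from rfl, tupleEval_tmul, Pi.one_apply, mul_one]

theorem sum_tupleEval_tmul [Fintype ι] (p : ℕ) (y : Bpow (ι → ℂ) p) (f : ι → ℂ) :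
    ∑ s, tupleEval (p + 1) (y ⊗ₜ[ℂ] f) s = (∑ s, tupleEval p y s) * ∑ a, f a := by
  rw [← (Fin.snocEquiv fun _ => ι).sum_comp, Fintype.sum_prod_type, Finset.sum_mul_sum,
    Finset.sum_comm]
  simp [Fin.snocEquiv, tupleEval_tmul]

theorem psiPow_apply_of_uniform [Fintype ι] {ψ : (ι → ℂ) →ₗ[ℂ] ℂ} {c : ℂ}
    (hψ : ∀ f, ψ f = c * ∑ a, f a) (p : ℕ) (x : Bpow (ι → ℂ) p) :
    psiPow (ι → ℂ) ψ p x = c ^ p * ∑ s, tupleEval p x s := by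
  induction p with
  | zero => simp [psiPow, tupleEval]; rfl
  | succ p ih =>
    induction x using Bpow.induction_on_succ with
    | zero => simp
    | tmul y f =>
      rw [psiPow_tmul, ih, hψ, sum_tupleEval_tmul]
      ring
    | add a b ha hb => simp [ha, hb, Finset.sum_add_distrib, mul_add]

end TupleEvaluation

theorem tupleEval_bas (N p : ℕ) (t : Fin p → Fin N) :
    tupleEval p (bas N p t) = fun s => if s = t then 1 else 0 := by
  induction p with
  | zero =>
    funext s
    simp [Subsingleton.elim s t]
    rfl
  | succ p ih =>
    funext s
    have init_last_eq : s = t ↔ Fin.init s = Fin.init t ∧ s (Fin.last p) = t (Fin.last p) := by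
      conv_lhs => rw [← Fin.snoc_init_self s, ← Fin.snoc_init_self t]
      exact Fin.snoc_inj
    simp only [bas, tupleEval_tmul, ih, Pi.single_apply, init_last_eq, ite_zero_mul_ite_zero,
      mul_one]
    rfl

theorem tupleEval_surjective (N p : ℕ) : Function.Surjective (tupleEval (ι := Fin N) p) :=
  fun g => ⟨∑ t, g t • bas N p t, by ext s; simp [tupleEval_bas, Finset.sum_apply]⟩

theorem tupleEval_bijective (N p : ℕ) : Function.Bijective (tupleEval (ι := Fin N) p) := by
  refine ⟨?_, tupleEval_surjective N p⟩
  refine (LinearMap.injective_iff_surjective_of_finrank_eq_finrank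
    (f := (tupleEval p).toLinearMap) ?_).mpr (tupleEval_surjective N p)
  simp [Bpow.finrank_pi]

theorem unifState_apply (N : ℕ) (f : Fin N → ℂ) : unifState N f = (N : ℂ)⁻¹ * ∑ a, f a := by
  simp [unifState]

def sigmaUncurryAlgEquiv {ι : Type} (κ : ι → Type) : (∀ i, κ i → ℂ) ≃ₐ[ℂ] (Sigma κ → ℂ) where
  toFun f v := f v.1 v.2
  invFun g i s := g ⟨i, s⟩
  left_inv _ := rfl
  right_inv _ := rfl
  map_mul' _ _ := rfl
  map_add' _ _ := rfl
  commutes' _ := rfl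

noncomputable def treeAlgEquiv (N k : ℕ) : Bk (Fin N → ℂ) k ≃ₐ[ℂ] (Vtx N k → ℂ) :=
  (AlgEquiv.piCongrRight fun j : Fin (k + 1) =>
    AlgEquiv.ofBijective (tupleEval j) (tupleEval_bijective N j)).trans
    (sigmaUncurryAlgEquiv _)

section TreeAlgEquiv

variable {N k : ℕ}

theorem treeAlgEquiv_apply (x : Bk (Fin N → ℂ) k) (v : Vtx N k) :
    treeAlgEquiv N k x v = tupleEval v.1 (x v.1) v.2 :=
  rfl

theorem treeAlgEquiv_single_apply_self (j : Fin (k + 1)) (y : Bpow (Fin N → ℂ) j)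
    (s : Fin j → Fin N) : treeAlgEquiv N k (Pi.single j y) ⟨j, s⟩ = tupleEval j y s := by
  rw [treeAlgEquiv_apply, Pi.single_eq_same]

theorem treeAlgEquiv_single_apply_of_ne {i j : Fin (k + 1)} (h : i ≠ j)
    (y : Bpow (Fin N → ℂ) j) (s : Fin i → Fin N) :
    treeAlgEquiv N k (Pi.single j y) ⟨i, s⟩ = 0 := by
  rw [treeAlgEquiv_apply, Pi.single_eq_of_ne h, map_zero, Pi.zero_apply]

theorem treeAlgEquiv_single_bas (j : Fin (k + 1)) (t : Fin j → Fin N) :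
    treeAlgEquiv N k (Pi.single j (bas N j t)) = fun v => if v = ⟨j, t⟩ then 1 else 0 := by
  ext ⟨i, s⟩
  by_cases hij : i = j
  · subst hij
    simp [treeAlgEquiv_single_apply_self, tupleEval_bas]
  · simp [treeAlgEquiv_single_apply_of_ne hij, hij]

theorem psiK_unifState_apply (δ : ℝ) (x : Bk (Fin N → ℂ) k) :
    psiK (Fin N → ℂ) (unifState N) δ k x
      = ∑ v : Vtx N k, ((delk δ k : ℂ)⁻¹ * (δ : ℂ) ^ (v.1 : ℕ) * ((N : ℂ) ^ (v.1 : ℕ))⁻¹)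
          * treeAlgEquiv N k x v := by
  rw [psiK_apply, Fintype.sum_sigma]
  refine Finset.sum_congr rfl fun i _ => ?_
  rw [psiPow_apply_of_uniform (unifState_apply N), Finset.mul_sum, Finset.mul_sum]
  refine Finset.sum_congr rfl fun t _ => ?_
  rw [treeAlgEquiv_apply, inv_pow]
  ring

theorem not_edgeRel_of_fst_eq_zero {v w : Vtx N k} (hw : w.1 = 0) : ¬ EdgeRel v w :=
  fun ⟨h, _⟩ => by simp [hw] at h

theorem edgeRel_succ_iff (i : Fin k) (s : Fin (i + 1) → Fin N) (v : Vtx N k) :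
    EdgeRel v ⟨i.succ, s⟩ ↔ v = ⟨i.castSucc, Fin.init s⟩ := by
  constructor
  · rintro ⟨hlen, hpre⟩
    obtain ⟨p, u⟩ := v
    obtain rfl : p = i.castSucc := Fin.ext (by simp at hlen; simp; omega)
    congr
    funext m
    exact hpre m
  · rintro rfl
    exact ⟨rfl, fun _ => rfl⟩

theorem treeAlgEquiv_Ak_apply (f : Bk (Fin N → ℂ) k) (w : Vtx N k) :
    treeAlgEquiv N k (Ak (Fin N → ℂ) k f) w
      = treeAlgEquiv N k f w
        + ∑ v : Vtx N k, (if EdgeRel v w then (1 : ℂ) else 0) * treeAlgEquiv N k f v := by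
  rw [Ak_apply, map_add, Pi.add_apply, map_sum, Finset.sum_apply]
  congr 1
  obtain ⟨q, s⟩ := w
  induction q using Fin.cases with
  | zero =>
    simp [treeAlgEquiv_single_apply_of_ne (Fin.succ_ne_zero _).symm,
      not_edgeRel_of_fst_eq_zero]
  | succ i =>
    simp_rw [edgeRel_succ_iff]
    rw [Finset.sum_eq_single i (fun j _ hj =>
      treeAlgEquiv_single_apply_of_ne ((Fin.succ_injective _).ne hj).symm _ _) (by simp)]
    simp [tupleEval_tensOne, treeAlgEquiv_apply]

end TreeAlgEquiv

theorem stmt19_general (N : ℕ) (k : ℕ) :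
    ∃ Φ : Bk (Fin N → ℂ) k ≃ₐ[ℂ] (Vtx N k → ℂ),
      (∀ (j : Fin (k + 1)) (t : Fin (j : ℕ) → Fin N),
        Φ (Pi.single j (bas N (j : ℕ) t))
          = fun v : Vtx N k => if v = ⟨j, t⟩ then (1 : ℂ) else 0) ∧
      (∀ x : Bk (Fin N → ℂ) k,
        psiK (Fin N → ℂ) (unifState N) (Real.sqrt N) k x
          = ∑ v : Vtx N k,
              ((delk (Real.sqrt N) k : ℂ)⁻¹ * ((Real.sqrt N : ℂ)) ^ (v.1 : ℕ)
                * ((N : ℂ) ^ (v.1 : ℕ))⁻¹) * Φ x v) ∧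
      (∀ (f : Bk (Fin N → ℂ) k) (w : Vtx N k),
        Φ (Ak (Fin N → ℂ) k f) w
          = Φ f w + ∑ v : Vtx N k,
              (if EdgeRel v w then (1 : ℂ) else 0) * Φ f v) :=
  ⟨treeAlgEquiv N k, treeAlgEquiv_single_bas, psiK_unifState_apply _, treeAlgEquiv_Ak_apply⟩

/-- STATEMENT 19: for `B = ℂ^N` with its uniform `δ`-form (`δ = √N`), the
quantum graph `𝒢_k = (B_k, ψ_k, 𝒜_k)` is the classical rooted `N`-regular tree
of depth `k`: under the canonical algebra isomorphism sending the standard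
basis of `(ℂ^N)^{⊗p}` to indicator functions of tuples, the state `ψ_k`
becomes the corresponding weighted measure and `𝒜_k − Id` connects each vertex
to precisely its `N` children (and the root to the one-letter tuples). -/
theorem stmt19 (N : ℕ) (hN : 0 < N) (k : ℕ) :
    ∃ Φ : Bk (Fin N → ℂ) k ≃ₐ[ℂ] (Vtx N k → ℂ),
      (∀ (j : Fin (k + 1)) (t : Fin (j : ℕ) → Fin N),
        Φ (Pi.single j (bas N (j : ℕ) t))
          = fun v : Vtx N k => if v = ⟨j, t⟩ then (1 : ℂ) else 0) ∧
      (∀ x : Bk (Fin N → ℂ) k,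
        psiK (Fin N → ℂ) (unifState N) (Real.sqrt N) k x
          = ∑ v : Vtx N k,
              ((delk (Real.sqrt N) k : ℂ)⁻¹ * ((Real.sqrt N : ℂ)) ^ (v.1 : ℕ)
                * ((N : ℂ) ^ (v.1 : ℕ))⁻¹) * Φ x v) ∧
      (∀ (f : Bk (Fin N → ℂ) k) (w : Vtx N k),
        Φ (Ak (Fin N → ℂ) k f) w
          = Φ f w + ∑ v : Vtx N k,
              (if EdgeRel v w then (1 : ℂ) else 0) * Φ f v) :=
  stmt19_general N k
end
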